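/- arXiv:2206.04286 — 15 statements merged into one kernel-verified Lean document; each statement's English description precedes it below -/
import Mathlib

section
/- In any Novikov algebra A, the identities (ad, b, c) = (a, bd, c) = (a, b, c)d hold for all a, b, c, d in A, where (x,y,z) = (xy)z - x(yz) denotes the associator. -/
/-- The associator `(a,b,c) = (ab)c - a(bc)`. -/
def asc {A : Type*} [NonUnitalNonAssocRing A] (a b c : A) : A := a * b * c - a * (b * c)

/-- Membership in the nucleus `N(A)`. -/
def inNuc {A : Type*} [NonUnitalNonAssocRing A] (n : A) : Prop :=
  ∀ a b : A, asc n a b = 0 ∧ asc a n b = 0 ∧ asc a b n = 0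

/-- In a Novikov algebra, `(ad,b,c) = (a,bd,c) = (a,b,c)d`. -/
theorem novikov_assoc_shift {A : Type*} [NonUnitalNonAssocRing A]
    (hsym : ∀ a b c : A, asc a b c = asc b a c)
    (hrc : ∀ a b c : A, a * b * c = a * c * b)
    (a b c d : A) :
    asc (a * d) b c = asc a (b * d) c ∧ asc a (b * d) c = asc a b c * d := by
  have key : ∀ x y z w : A, asc x y z * w = asc (x * w) y z := by
    intro x y z w
    rw [asc, asc, sub_mul, hrc (x * y) z w, hrc x y w, hrc x (y * z) w]
  have h1 : asc (a * d) b c = asc a b c * d := (key a b c d).symm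
  have h2 : asc a (b * d) c = asc a b c * d := by
    rw [hsym a (b * d) c, ← key b a c d, ← hsym a b c]
  exact ⟨h1.trans h2.symm, h2⟩
end

section
/- In any right-commutative algebra A (i.e., (ab)c = (ac)b for all a,b,c), for any n in the nucleus N(A) and any x, y, z in A, one has (x, y, nz) = (x, y, z)n and (x, ny, z) = (x, y, z)n. -/
/-- In any right-commutative algebra, for `n` in the nucleus:
`(x,y,nz) = (x,y,z)n` and `(x,ny,z) = (x,y,z)n`. -/
theorem nucleus_assoc_rightComm {A : Type*} [NonUnitalNonAssocRing A]
    (hrc : ∀ a b c : A, a * b * c = a * c * b)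
    (n : A) (hn : inNuc n) (x y z : A) :
    asc x y (n * z) = asc x y z * n ∧ asc x (n * y) z = asc x y z * n := by
  have hN1 : ∀ a b : A, n * a * b = n * (a * b) :=
    fun a b => sub_eq_zero.mp ((hn a b).1)
  have hL : ∀ a b : A, a * n * b = a * (n * b) :=
    fun a b => sub_eq_zero.mp ((hn a b).2.1)
  have hR : ∀ a b : A, a * b * n = a * (b * n) :=
    fun a b => sub_eq_zero.mp ((hn a b).2.2)
  unfold asc
  constructor
  · rw [← hL (x * y) z, hrc (x * y) n z, ← hL y z, hrc y n z, ← hR x (y * z), ← sub_mul]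
  · rw [← hL x y, hrc x n y, hrc (x * y) n z, hN1 y z, ← hL x (y * z), hrc x n (y * z),
      ← sub_mul]
end

section
/- Let A be a Novikov algebra, x, y, z in A, and n in the nucleus N(A). Then n(x,y,z) = (nx,y,z) = (xn,y,z) = (x,yn,z) = (x,ny,z) = (x,y,nz) = (x,y,zn) = (x,y,z)n = 0. -/
/-- Lemma 1: in a Novikov algebra, all products of a nuclear element with an associator vanish. -/
theorem novikov_nucleus_assoc_zero {A : Type*} [NonUnitalNonAssocRing A]
    (hsym : ∀ a b c : A, asc a b c = asc b a c)
    (hrc : ∀ a b c : A, a * b * c = a * c * b)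
    (n : A) (hn : inNuc n) (x y z : A) :
    n * asc x y z = 0 ∧ asc (n * x) y z = 0 ∧ asc (x * n) y z = 0 ∧
    asc x (y * n) z = 0 ∧ asc x (n * y) z = 0 ∧ asc x y (n * z) = 0 ∧
    asc x y (z * n) = 0 ∧ asc x y z * n = 0 := by
  have hL : ∀ a b : A, n * a * b = n * (a * b) := fun a b => sub_eq_zero.mp (hn a b).1
  have hM : ∀ a b : A, a * n * b = a * (n * b) := fun a b => sub_eq_zero.mp (hn a b).2.1
  have hR : ∀ a b : A, a * b * n = a * (b * n) := fun a b => sub_eq_zero.mp (hn a b).2.2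
  have hcomm : ∀ a b : A, n * (a * b) = n * (b * a) := by
    intro a b; rw [← hL, hrc, hL]
  have key : ∀ a b c : A, n * asc a b c = 0 := by
    intro a b c
    have h : n * (a * b * c) = n * (a * (b * c)) := by
      calc n * (a * b * c) = n * (a * b) * c := (hL _ _).symm
        _ = n * (b * a) * c := by rw [hcomm]
        _ = n * b * a * c := by rw [← hL b a]
        _ = n * b * c * a := hrc (n * b) a c
        _ = n * (b * c) * a := by rw [hL b c]
        _ = n * ((b * c) * a) := hL _ _
        _ = n * (a * (b * c)) := hcomm _ _
    simp [asc, mul_sub, h]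
  have e1 : ∀ a b c : A, asc (n * a) b c = n * asc a b c := by
    intro a b c
    simp only [asc]
    rw [hL a b, hL (a * b) c, hL a (b * c), ← mul_sub]
  have A1 : n * asc x y z = 0 := key x y z
  have A2 : asc (n * x) y z = 0 := by rw [e1]; exact key x y z
  have A5 : asc x (n * y) z = 0 := by rw [hsym, e1]; exact key y x z
  have A3 : asc (x * n) y z = 0 := by
    have : asc (x * n) y z = asc x (n * y) z := by
      simp only [asc]
      rw [hM x y, hM x (y * z), ← hL y z]
    rw [this]; exact A5
  have A4 : asc x (y * n) z = 0 := by
    have h1 : asc (y * n) x z = asc y (n * x) z := by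
      simp only [asc]
      rw [hM y x, hM y (x * z), ← hL x z]
    rw [hsym, h1, hsym]
    exact A2
  have A6 : asc x y (n * z) = 0 := by
    have : asc x y (n * z) = asc x (y * n) z := by
      simp only [asc]
      rw [← hM (x * y) z, hR x y, hM y z]
    rw [this]; exact A4
  have A7 : asc x y (z * n) = 0 := by
    have : asc x y (z * n) = asc x (y * n) z := by
      simp only [asc]
      rw [← hR (x * y) z, hrc (x * y) z n, hR x y, ← hR y z, hrc y z n]
    rw [this]; exact A4
  have A8 : asc x y z * n = 0 := by
    have : asc x y z * n = asc x y (z * n) := by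
      simp only [asc, sub_mul]
      rw [hR (x * y) z, hR x (y * z), hR y z]
    rw [this]; exact A7
  exact ⟨A1, A2, A3, A4, A5, A6, A7, A8⟩
end

section
/- Let A be a Novikov algebra and let N(A) be its nucleus and D(A) its associator ideal (the ideal generated by all associators). Then D(A)N(A) = N(A)D(A) = 0, i.e., every product of an element of D(A) with an element of N(A) (in either order) is zero. -/
/-- Membership in the two-sided ideal generated by a set `S`. -/
inductive InIdealGen {A : Type*} [NonUnitalNonAssocRing A] (S : Set A) : A → Prop
  | of {x : A} : x ∈ S → InIdealGen S x
  | zero : InIdealGen S 0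
  | add {x y : A} : InIdealGen S x → InIdealGen S y → InIdealGen S (x + y)
  | neg {x : A} : InIdealGen S x → InIdealGen S (-x)
  | mul_left {x : A} (a : A) : InIdealGen S x → InIdealGen S (a * x)
  | mul_right {x : A} (a : A) : InIdealGen S x → InIdealGen S (x * a)

/-- In a Novikov algebra, `D(A)·N(A) = N(A)·D(A) = 0` where `D(A)` is the associator ideal. -/
theorem novikov_assocIdeal_mul_nucleus_eq_zero {A : Type*} [NonUnitalNonAssocRing A]
    (hsym : ∀ a b c : A, asc a b c = asc b a c)
    (hrc : ∀ a b c : A, a * b * c = a * c * b)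
    (d : A) (hd : InIdealGen {x : A | ∃ a b c : A, x = asc a b c} d)
    (n : A) (hn : inNuc n) :
    d * n = 0 ∧ n * d = 0 := by
  -- Unpack nucleus conditions
  have hL : ∀ x y : A, n * x * y = n * (x * y) := fun x y =>
    sub_eq_zero.mp ((hn x y).1)
  have hM : ∀ x y : A, x * n * y = x * (n * y) := fun x y =>
    sub_eq_zero.mp ((hn x y).2.1)
  have hR : ∀ x y : A, x * y * n = x * (y * n) := fun x y =>
    sub_eq_zero.mp ((hn x y).2.2)
  -- F1 : x(ny) = x(yn)
  have F1 : ∀ x y : A, x * (n * y) = x * (y * n) := by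
    intro x y
    rw [← hM x y, hrc x n y, hR x y]
  -- F2 : n(xy) = n(yx)
  have F2 : ∀ x y : A, n * (x * y) = n * (y * x) := by
    intro x y
    rw [← hL x y, hrc n x y, hL y x]
  -- N3 symmetry: ((n*x)*y)*z symmetric in x,y
  have N3sym : ∀ x y z : A, n * x * y * z = n * y * x * z := by
    intro x y z
    rw [hL x y, F2 x y, ← hL y x]
  -- L1 : n * asc a b c = 0
  have L1 : ∀ a b c : A, n * asc a b c = 0 := by
    intro a b c
    have e1 : n * (a * b * c) = n * a * b * c := by
      rw [← hL (a*b) c, ← hL a b]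
    have e2 : n * (a * (b * c)) = n * b * c * a := by
      rw [F2 a (b*c), ← hL (b*c) a, ← hL b c]
    have e3 : n * a * b * c = n * b * c * a := by
      rw [N3sym a b c, hrc (n*b) a c]
    simp only [asc, mul_sub, e1, e2, e3, sub_self]
  -- L2 : asc a b c * n = asc (a*n) b c
  have L2 : ∀ a b c : A, asc a b c * n = asc (a*n) b c := by
    intro a b c
    have e1 : a * b * c * n = a * n * b * c := by
      rw [hrc (a*b) c n, hR a b, ← F1 a b, ← hM a b]
    have e2 : a * (b * c) * n = a * n * (b * c) := hrc a (b*c) n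
    simp only [asc, sub_mul, e1, e2]
  -- L3 : asc (n*a) b c = 0
  have L3 : ∀ a b c : A, asc (n*a) b c = 0 := by
    intro a b c
    have e1 : n * a * b * c = n * (a * b * c) := by rw [hL a b, hL (a*b) c]
    have e2 : n * a * (b * c) = n * (a * (b * c)) := hL a (b*c)
    have := L1 a b c
    simp only [asc, mul_sub] at this ⊢
    rw [e1, e2]
    exact this
  -- L4 : asc (n*a - a*n) b c = 0
  have L4 : ∀ a b c : A, asc (n*a - a*n) b c = 0 := by
    intro a b c
    rw [hsym (n*a - a*n) b c]
    have hbu : b * (n*a - a*n) = 0 := by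
      rw [mul_sub, F1 b a, sub_self]
    have hbuc : b * ((n*a - a*n) * c) = 0 := by
      have : (n*a - a*n) * c = n * (a*c) - a*c*n := by
        rw [sub_mul, hL a c, hrc a n c]
      rw [this, mul_sub, F1 b (a*c)]
      exact sub_self _
    simp only [asc, hbu, hbuc, zero_mul, sub_zero, sub_self]
  -- Main: asc a b c * n = 0
  have key : ∀ a b c : A, asc a b c * n = 0 := by
    intro a b c
    have split : asc (n*a) b c = asc (n*a - a*n) b c + asc (a*n) b c := by
      simp only [asc, sub_mul, mul_sub]
      abel
    have h0 : asc (a*n) b c = 0 := by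
      rw [L3, L4, zero_add] at split
      exact split.symm
    rw [L2, h0]
  -- Induction over the ideal
  induction hd with
  | of h =>
      obtain ⟨a, b, c, rfl⟩ := h
      exact ⟨key a b c, L1 a b c⟩
  | zero => simp
  | add hx hy ihx ihy =>
      rw [add_mul, mul_add, ihx.1, ihy.1, ihx.2, ihy.2]
      simp
  | neg hx ih =>
      rw [neg_mul, mul_neg, ih.1, ih.2]
      simp
  | mul_left a hx ih =>
      refine ⟨?_, ?_⟩
      · rw [hR a _, ih.1, mul_zero]
      · rw [← hL a _, hrc n a _, ih.2, zero_mul]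
  | mul_right a hx ih =>
      refine ⟨?_, ?_⟩
      · rw [hrc _ a n, ih.1, zero_mul]
      · rw [← hL _ a, ih.2, zero_mul]
end

section
/- Let I be a left ideal of a Novikov algebra A. Then the left annihilator Ann_l(I) = {a in A : aI = 0} is a two-sided ideal of A. -/
/-- Lemma 2, part 1: the left annihilator of a left ideal of a Novikov algebra
is a two-sided ideal. -/
theorem novikov_leftAnn_isIdeal {A : Type*} [NonUnitalNonAssocRing A]
    (hsym : ∀ a b c : A, asc a b c = asc b a c)
    (hrc : ∀ a b c : A, a * b * c = a * c * b)
    (I : AddSubgroup A) (hI : ∀ i ∈ I, ∀ a : A, a * i ∈ I) :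
    (0 : A) ∈ {a : A | ∀ i ∈ I, a * i = 0} ∧
    (∀ x ∈ {a : A | ∀ i ∈ I, a * i = 0}, ∀ y ∈ {a : A | ∀ i ∈ I, a * i = 0},
      x + y ∈ {a : A | ∀ i ∈ I, a * i = 0}) ∧
    (∀ x ∈ {a : A | ∀ i ∈ I, a * i = 0}, -x ∈ {a : A | ∀ i ∈ I, a * i = 0}) ∧
    (∀ x ∈ {a : A | ∀ i ∈ I, a * i = 0}, ∀ a : A,
      x * a ∈ {a : A | ∀ i ∈ I, a * i = 0} ∧ a * x ∈ {a : A | ∀ i ∈ I, a * i = 0}) := by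
  refine ⟨fun i _ => zero_mul i, fun x hx y hy i hi => by
      rw [add_mul, hx i hi, hy i hi, add_zero],
    fun x hx i hi => by rw [neg_mul, hx i hi, neg_zero],
    fun x hx a => ⟨fun i hi => by rw [hrc, hx i hi, zero_mul], fun i hi => ?_⟩⟩
  have h := hsym a x i
  simp only [asc] at h
  have h1 : x * a * i = 0 := by rw [hrc, hx i hi, zero_mul]
  have h2 : x * (a * i) = 0 := hx _ (hI i hi a)
  have h3 : x * i = 0 := hx i hi
  rw [h1, h2, h3, mul_zero] at h
  simpa using h
end

section
/- The nucleus N(A) of a Novikov algebra A is a two-sided ideal of A. -/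
/-- Lemma 3, part 1: the nucleus of a Novikov algebra is a two-sided ideal. -/
theorem novikov_nucleus_isIdeal {A : Type*} [NonUnitalNonAssocRing A]
    (hsym : ∀ a b c : A, asc a b c = asc b a c)
    (hrc : ∀ a b c : A, a * b * c = a * c * b) :
    inNuc (0 : A) ∧
    (∀ x y : A, inNuc x → inNuc y → inNuc (x + y)) ∧
    (∀ x : A, inNuc x → inNuc (-x)) ∧
    (∀ n : A, inNuc n → ∀ a : A, inNuc (n * a) ∧ inNuc (a * n)) := by
  have Hsym : ∀ a b c : A, a*b*c - a*(b*c) = b*a*c - b*(a*c) := hsym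
  refine ⟨?_, ?_, ?_, ?_⟩
  · intro a b
    refine ⟨?_, ?_, ?_⟩ <;> simp [asc]
  · intro x y hx hy a b
    obtain ⟨hx1, hx2, hx3⟩ := hx a b
    obtain ⟨hy1, hy2, hy3⟩ := hy a b
    simp only [asc] at hx1 hx2 hx3 hy1 hy2 hy3 ⊢
    refine ⟨?_, ?_, ?_⟩
    · linear_combination (norm := skip) hx1 + hy1
      simp only [add_mul, mul_add]; abel1
    · linear_combination (norm := skip) hx2 + hy2
      simp only [add_mul, mul_add]; abel1
    · linear_combination (norm := skip) hx3 + hy3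
      simp only [add_mul, mul_add]; abel1
  · intro x hx a b
    obtain ⟨hx1, hx2, hx3⟩ := hx a b
    simp only [asc] at hx1 hx2 hx3 ⊢
    refine ⟨?_, ?_, ?_⟩
    · linear_combination (norm := skip) -hx1
      simp only [neg_mul, mul_neg]; abel1
    · linear_combination (norm := skip) -hx2
      simp only [neg_mul, mul_neg]; abel1
    · linear_combination (norm := skip) -hx3
      simp only [neg_mul, mul_neg]; abel1
  · intro n hn a
    have HN1 : ∀ u v : A, n*u*v = n*(u*v) := fun u v => sub_eq_zero.mp ((hn u v).1)
    have HN2 : ∀ u v : A, u*n*v = u*(n*v) := fun u v => sub_eq_zero.mp ((hn u v).2.1)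
    have HN3 : ∀ u v : A, u*v*n = u*(v*n) := fun u v => sub_eq_zero.mp ((hn u v).2.2)
    have A1 : ∀ x y : A, asc (n*a) x y = 0 := fun x y => by
      show (n*a)*x*y - (n*a)*(x*y) = 0
      linear_combination (norm := skip) - (Hsym (a * n) x y) - (Hsym (a * n) x y) + (Hsym (a * n) y x) + (Hsym (n * a) x y) + (hrc (n * a) x y) + (Hsym x y (n * a)) + (Hsym x y (n * a)) + (hrc y (n * a) x) - (Hsym (n * x) a y) - (Hsym (n * x) a y) + (hrc (n * x) a y) + (Hsym (n * x) y a) - (hrc a (n * x) y) - (Hsym a y (n * x)) + (hrc y (n * x) a) + (Hsym (x * n) a y) + (Hsym (x * n) a y) - (hrc (x * n) a y) - (hrc (x * n) a y) - (Hsym (x * n) y a) - (Hsym (x * n) y a) + (Hsym (n * y) a x) - (hrc (n * y) a x) - (Hsym (n * y) x a) - (hrc a (n * y) x) + (Hsym a x (n * y)) + (Hsym a x (n * y)) - (hrc x (n * y) a) - (Hsym (y * n) a x) + (hrc (y * n) a x) + (Hsym (y * n) x a) + (Hsym (y * n) x a) - (Hsym (x * a) n y) + (hrc n (x * a) y) -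 (Hsym n y (x * a)) - (Hsym n y (x * a)) + (Hsym (a * x) n y) + (Hsym (a * x) n y) + (Hsym (a * x) n y) - (hrc n (a * x) y) + (Hsym n y (a * x)) + (hrc n (a * y) x) + (hrc n (a * y) x) - (Hsym n x (a * y)) - (Hsym n x (a * y)) - (hrc n (y * a) x) + (Hsym n x (y * a)) + (Hsym n x (y * a)) - (Hsym (y * x) n a) - (Hsym (y * x) n a) - (Hsym (y * x) n a) - (Hsym n a (y * x)) + (Hsym (x * y) n a) + (Hsym (x * y) n a) + (Hsym n a (x * y)) + (Hsym n a (x * y)) - ((Hsym n a x) * y) + (y * (Hsym n a x)) - (y * (hrc n a x)) + ((Hsym n x a) * y) - (y * (Hsym n x a)) - (y * (Hsym n x a)) + ((hrc a n x) * y) - ((Hsym a x n) * y) - ((Hsym a x n) * y) + ((hrc x n a) * y) + ((Hsym n a y) * x) + ((Hsym n a y) * x) - (x * (Hsym n a y)) - (x * (Hsym n a y)) - ((hrc n a y) * x) + (x * (hrc n a y)) - ((Hsym n y a) * x) + (x * (Hsym n y a)) + (x * (Hsym n y a)) + ((hrc a n y) * x) + ((Hsym a y n) * x) - ((hrc y n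 a) * x) + (a * (Hsym n x y)) + (a * (Hsym n x y)) - (a * (Hsym n y x)) - ((Hsym x y n) * a) - ((Hsym x y n) * a) - ((hrc y n x) * a) + (HN1 x (a * y)) + (HN1 x (a * y)) - (HN1 x (y * a)) - (HN1 x (y * a)) + (HN1 y (x * a)) + (HN1 y (x * a)) - (HN1 y (a * x)) - (HN1 (y * x) a) - (HN1 (y * x) a) - (HN1 (y * x) a) + (HN1 (x * y) a) + (HN1 (x * y) a) + (HN1 a (y * x)) - (HN1 a (x * y)) - (HN1 a (x * y)) - (HN1 (x * a) y) + (HN1 (a * x) y) + (HN1 (a * x) y) + (HN1 (a * x) y)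
      simp only [sub_mul, mul_sub, add_mul, mul_add]
      abel1
    have A3 : ∀ x y : A, asc x y (n*a) = 0 := fun x y => by
      show x*y*(n*a) - x*(y*(n*a)) = 0
      linear_combination (norm := skip) - (Hsym (a * n) x y) - (Hsym (a * n) x y) + (Hsym (a * n) y x) + (hrc (n * a) x y) - (hrc x (n * a) y) + (Hsym x y (n * a)) + (Hsym x y (n * a)) + (Hsym x y (n * a)) + (Hsym x y (n * a)) + (hrc y (n * a) x) - (Hsym (n * x) a y) - (Hsym (n * x) a y) + (hrc (n * x) a y) + (Hsym (n * x) y a) - (hrc a (n * x) y) - (Hsym a y (n * x)) + (hrc y (n * x) a) + (Hsym (x * n) a y) + (Hsym (x * n) a y) - (hrc (x * n) a y) - (Hsym (x * n) y a) - (Hsym (x * n) y a) - (Hsym (x * n) y a) - (hrc y (x * n) a) + (Hsym (n * y) a x) - (hrc (n * y) a x) - (Hsym (n * y) x a) - (hrc a (n * y) x) + (Hsym a x (n * y)) + (Hsym a x (n * y)) - (hrc x (n * y) a) - (Hsym (y * n) a x) + (Hsym (y * n) x a) + (Hsym (y * n) x a) + (Hsym (y * n) x a) + (hrc x (y * n)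 a) - (Hsym (x * a) n y) - (hrc (x * a) n y) - (Hsym (x * a) y n) + (hrc n (x * a) y) - (Hsym n y (x * a)) - (Hsym n y (x * a)) - (hrc y (x * a) n) + (Hsym (a * x) n y) + (Hsym (a * x) n y) + (Hsym (a * x) n y) - (hrc n (a * x) y) + (Hsym n y (a * x)) + (hrc n (a * y) x) + (hrc n (a * y) x) - (Hsym n x (a * y)) - (Hsym n x (a * y)) + (hrc (y * a) n x) + (Hsym (y * a) x n) - (hrc n (y * a) x) + (Hsym n x (y * a)) + (Hsym n x (y * a)) + (Hsym n x (y * a)) - (Hsym (y * x) n a) - (Hsym (y * x) n a) - (Hsym (y * x) n a) - (Hsym (y * x) n a) - (Hsym (y * x) n a) - (Hsym n a (y * x)) + (Hsym (x * y) n a) + (Hsym (x * y) n a) + (Hsym (x * y) n a) + (Hsym (x * y) n a) + (Hsym n a (x * y)) + (Hsym n a (x * y)) - ((Hsym n a x) * y) + (y * (Hsym n a x)) - (y * (hrc n a x)) + ((Hsym n x a) * y) - (y * (Hsym n x a)) - (y * (Hsym n x a)) - (y * (Hsym n x a)) - (y * (Hsym n x a)) + ((hrc a n x) * y) - ((Hsym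 a x n) * y) - ((Hsym a x n) * y) - (y * (hrc x n a)) + ((Hsym n a y) * x) + ((Hsym n a y) * x) - (x * (Hsym n a y)) - (x * (Hsym n a y)) - ((hrc n a y) * x) + (x * (hrc n a y)) + (x * (hrc n a y)) - ((Hsym n y a) * x) + (x * (Hsym n y a)) + (x * (Hsym n y a)) + (x * (Hsym n y a)) + ((hrc a n y) * x) + ((Hsym a y n) * x) + (a * (Hsym n x y)) + (a * (Hsym n x y)) - (a * (Hsym n y x)) + ((hrc x n y) * a) + ((hrc x n y) * a) - ((Hsym x y n) * a) - ((Hsym x y n) * a) - ((hrc y n x) * a) - ((hrc y n x) * a) - ((hrc y n x) * a) + (HN1 x (a * y)) + (HN1 x (a * y)) - (HN1 x (y * a)) - (HN1 x (y * a)) - (HN1 x (y * a)) + (HN3 x (y * a)) + (HN1 y (x * a)) + (HN1 y (x * a)) - (HN1 y (a * x)) - (HN1 (y * x) a) - (HN1 (y * x) a) - (HN1 (y * x) a) - (HN1 (y * x) a) - (HN1 (y * x) a) + (HN1 (x * y) a) + (HN1 (x * y) a) + (HN1 (x * y) a) + (HN1 (x * y) a) + (HN1 a (y * x)) - (HN1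 a (x * y)) - (HN1 a (x * y)) - (HN1 (x * a) y) + (HN1 (a * x) y) + (HN1 (a * x) y) + (HN1 (a * x) y) + (y * (HN1 x a)) + (y * (HN1 x a))
      simp only [sub_mul, mul_sub, add_mul, mul_add]
      abel1
    have B1 : ∀ x y : A, asc (a*n) x y = 0 := fun x y => by
      show (a*n)*x*y - (a*n)*(x*y) = 0
      linear_combination (norm := skip) - (Hsym (a * n) x y) - (Hsym (a * n) x y) - (Hsym (a * n) x y) + (Hsym (a * n) y x) + (Hsym (a * n) y x) + (hrc (n * a) x y) + (hrc (n * a) x y) + (hrc (n * a) x y) - (hrc x (n * a) y) + (Hsym x y (n * a)) + (Hsym x y (n * a)) + (Hsym x y (n * a)) + (Hsym x y (n * a)) + (hrc y (n * a) x) + (hrc y (n * a) x) - (Hsym (n * x) a y) - (Hsym (n * x) a y) - (Hsym (n * x) a y) - (Hsym (n * x) a y) + (hrc (n * x) a y) + (hrc (n * x) a y) + (Hsym (n * x) y a) + (Hsym (n * x) y a) - (hrc a (n * x) y) - (hrc a (n * x) y) - (Hsym a y (n * x)) - (Hsym a y (n * x)) + (hrc y (n * x) a) + (hrc y (n * x)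 a) + (Hsym (x * n) a y) + (Hsym (x * n) a y) + (Hsym (x * n) a y) - (hrc (x * n) a y) - (hrc (x * n) a y) - (hrc (x * n) a y) - (Hsym (x * n) y a) - (Hsym (x * n) y a) - (Hsym (x * n) y a) - (Hsym (x * n) y a) + (Hsym (n * y) a x) + (Hsym (n * y) a x) - (hrc (n * y) a x) - (Hsym (n * y) x a) - (hrc a (n * y) x) - (hrc a (n * y) x) + (Hsym a x (n * y)) + (Hsym a x (n * y)) + (Hsym a x (n * y)) - (hrc x (n * y) a) - (Hsym (y * n) a x) - (Hsym (y * n) a x) + (hrc (y * n) a x) + (hrc (y * n) a x) + (Hsym (y * n) x a) + (Hsym (y * n) x a) + (Hsym (y * n) x a) + (Hsym (y * n) x a) - (Hsym (x * a) n y) - (Hsym (x * a) n y) + (hrc n (x * a) y) - (Hsym n y (x * a)) - (Hsym n y (x * a)) - (Hsym n y (x * a)) - (Hsym n y (x * a)) + (Hsym (a * x) n y) + (Hsym (a * x) n y) + (Hsym (a * x) n y) + (Hsym (a * x) n y) + (Hsym (a * x) n y) - (hrc n (a * x) y) - (hrc n (a * x) y) + (Hsym n y (a * x)) + (Hsym n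 y (a * x)) + (hrc n (a * y) x) + (hrc n (a * y) x) + (hrc n (a * y) x) + (hrc n (a * y) x) - (Hsym n x (a * y)) - (Hsym n x (a * y)) - (Hsym n x (a * y)) - (hrc n (y * a) x) - (hrc n (y * a) x) + (Hsym n x (y * a)) + (Hsym n x (y * a)) + (Hsym n x (y * a)) + (Hsym n x (y * a)) - (Hsym (y * x) n a) - (Hsym (y * x) n a) - (Hsym (y * x) n a) - (Hsym (y * x) n a) - (Hsym (y * x) n a) - (Hsym (y * x) n a) - (Hsym n a (y * x)) - (Hsym n a (y * x)) + (Hsym (x * y) n a) + (Hsym (x * y) n a) + (Hsym (x * y) n a) + (Hsym (x * y) n a) + (Hsym (x * y) n a) + (Hsym n a (x * y)) + (Hsym n a (x * y)) + (Hsym n a (x * y)) + (Hsym n a (x * y)) - ((Hsym n a x) * y) - ((Hsym n a x) * y) + (y * (Hsym n a x)) + (y * (Hsym n a x)) - ((hrc n a x) * y) - (y * (hrc n a x)) - (y * (hrc n a x)) + ((Hsym n x a) * y) - (y * (Hsym n x a)) - (y * (Hsym n x a)) - (y * (Hsym n x a)) - (y * (Hsym n x a)) + ((hrc a n x) * y)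 + ((hrc a n x) * y) - ((Hsym a x n) * y) - ((Hsym a x n) * y) - ((Hsym a x n) * y) + ((hrc x n a) * y) + ((Hsym n a y) * x) + ((Hsym n a y) * x) + ((Hsym n a y) * x) + ((Hsym n a y) * x) - (x * (Hsym n a y)) - (x * (Hsym n a y)) - (x * (Hsym n a y)) - ((hrc n a y) * x) + (x * (hrc n a y)) + (x * (hrc n a y)) + (x * (hrc n a y)) - ((Hsym n y a) * x) - ((Hsym n y a) * x) + (x * (Hsym n y a)) + (x * (Hsym n y a)) + (x * (Hsym n y a)) + (x * (Hsym n y a)) + ((hrc a n y) * x) + ((hrc a n y) * x) + ((Hsym a y n) * x) + ((Hsym a y n) * x) - ((hrc y n a) * x) - ((hrc y n a) * x) + (a * (Hsym n x y)) + (a * (Hsym n x y)) + (a * (Hsym n x y)) - (a * (Hsym n y x)) - (a * (Hsym n y x)) + ((hrc x n y) * a) - ((Hsym x y n) * a) - ((Hsym x y n) * a) - ((Hsym x y n) * a) - ((Hsym x y n) * a) - ((hrc y n x) * a) - ((hrc y n x) * a) + (HN1 x (a * y)) + (HN1 x (a * y)) + (HN1 x (a * y)) - (HN1 x (y * a)) -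 (HN1 x (y * a)) - (HN1 x (y * a)) - (HN1 x (y * a)) + (HN1 y (x * a)) + (HN1 y (x * a)) + (HN1 y (x * a)) + (HN1 y (x * a)) - (HN1 y (a * x)) - (HN1 y (a * x)) - (HN1 (y * x) a) - (HN1 (y * x) a) - (HN1 (y * x) a) - (HN1 (y * x) a) - (HN1 (y * x) a) - (HN1 (y * x) a) + (HN1 (x * y) a) + (HN1 (x * y) a) + (HN1 (x * y) a) + (HN1 (x * y) a) + (HN1 (x * y) a) + (HN1 a (y * x)) + (HN1 a (y * x)) - (HN1 a (x * y)) - (HN1 a (x * y)) - (HN1 a (x * y)) - (HN1 a (x * y)) - (HN1 (x * a) y) - (HN1 (x * a) y) + (HN1 (a * x) y) + (HN1 (a * x) y) + (HN1 (a * x) y) + (HN1 (a * x) y) + (HN1 (a * x) y) + (a * (HN1 x y))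
      simp only [sub_mul, mul_sub, add_mul, mul_add]
      abel1
    have B3 : ∀ x y : A, asc x y (a*n) = 0 := fun x y => by
      show x*y*(a*n) - x*(y*(a*n)) = 0
      linear_combination (norm := skip) - (Hsym (a * n) x y) - (hrc (a * n) x y) + (Hsym (a * n) y x) + (hrc (n * a) x y) - (hrc x (n * a) y) + (Hsym x y (n * a)) + (Hsym x y (n * a)) + (Hsym x y (n * a)) + (hrc y (n * a) x) - (Hsym (n * x) a y) - (Hsym (n * x) a y) + (hrc (n * x) a y) + (Hsym (n * x) y a) - (hrc a (n * x) y) - (Hsym a y (n * x)) + (hrc y (n * x) a) + (Hsym (x * n) a y) + (Hsym (x * n) a y) - (Hsym (x * n) y a) - (Hsym (x * n) y a) + (hrc a (x * n) y) - (hrc y (x * n) a) + (Hsym (n * y) a x) - (hrc (n * y) a x) - (Hsym (n * y) x a) - (hrc a (n * y) x) + (Hsym a x (n * y)) + (Hsym a x (n * y)) - (hrc x (n * y) a) - (Hsym (y * n) a x) + (Hsym (y * n) x a) + (Hsym (y * n) x a) + (Hsym (y * n) x a) - (Hsym a x (y * n)) + (hrc x (y * n) a) + (hrc x (y * n) a)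 - (Hsym (x * a) n y) - (hrc (x * a) n y) - (Hsym (x * a) y n) + (hrc n (x * a) y) - (Hsym n y (x * a)) - (Hsym n y (x * a)) - (hrc y (x * a) n) + (Hsym (a * x) n y) + (Hsym (a * x) n y) + (Hsym (a * x) n y) - (hrc (a * x) n y) - (Hsym (a * x) y n) - (hrc n (a * x) y) + (Hsym n y (a * x)) - (hrc (a * y) n x) - (Hsym (a * y) x n) + (hrc n (a * y) x) + (hrc n (a * y) x) - (Hsym n x (a * y)) - (Hsym n x (a * y)) + (hrc (y * a) n x) + (Hsym (y * a) x n) - (hrc n (y * a) x) + (Hsym n x (y * a)) + (Hsym n x (y * a)) + (Hsym n x (y * a)) - (hrc x (y * a) n) - (Hsym (y * x) n a) - (Hsym (y * x) n a) - (Hsym (y * x) n a) - (Hsym (y * x) n a) - (Hsym n a (y * x)) + (Hsym (x * y) n a) + (Hsym (x * y) n a) + (Hsym (x * y) n a) + (Hsym (x * y) n a) - (hrc (x * y) n a) - (Hsym (x * y) a n) + (Hsym n a (x * y)) + (Hsym n a (x * y)) - (hrc a (x * y) n) - ((Hsym n a x) * y) + (y * (Hsym n a x)) - (y * (hrc n a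 x)) + ((Hsym n x a) * y) - (y * (Hsym n x a)) - (y * (Hsym n x a)) - (y * (Hsym n x a)) + ((hrc a n x) * y) - ((Hsym a x n) * y) - ((hrc x n a) * y) - (y * (hrc x n a)) + ((Hsym n a y) * x) + ((Hsym n a y) * x) - (x * (Hsym n a y)) - (x * (Hsym n a y)) - ((hrc n a y) * x) + (x * (hrc n a y)) + (x * (hrc n a y)) - ((Hsym n y a) * x) + (x * (Hsym n y a)) + (x * (Hsym n y a)) + (x * (Hsym n y a)) - (x * (hrc a n y)) + ((Hsym a y n) * x) - (x * (Hsym a y n)) + (a * (Hsym n x y)) + (a * (Hsym n x y)) - (a * (Hsym n y x)) + ((hrc x n y) * a) + ((hrc x n y) * a) - ((Hsym x y n) * a) - ((hrc y n x) * a) - ((hrc y n x) * a) - ((hrc y n x) * a) + (HN1 x (a * y)) + (HN1 x (a * y)) - (HN3 x (a * y)) - (HN1 x (y * a)) - (HN1 x (y * a)) - (HN1 x (y * a)) + (HN3 x (y * a)) + (HN3 x (y * a)) + (HN1 y (x * a)) + (HN1 y (x * a)) - (HN1 y (a * x)) - (HN3 y (a * x)) - (HN1 (y * x) a) - (HN1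 (y * x) a) - (HN1 (y * x) a) - (HN1 (y * x) a) + (HN1 (x * y) a) + (HN1 (x * y) a) + (HN1 (x * y) a) + (HN1 (x * y) a) + (HN1 a (y * x)) - (HN1 a (x * y)) - (HN1 a (x * y)) - (HN1 (x * a) y) + (HN1 (a * x) y) + (HN1 (a * x) y) + (HN1 (a * x) y) + (a * (HN3 x y)) + (y * (HN1 x a))
      simp only [sub_mul, mul_sub, add_mul, mul_add]
      abel1
    exact ⟨fun x y => ⟨A1 x y, (hsym x (n*a) y).trans (A1 x y), A3 x y⟩,
           fun x y => ⟨B1 x y, (hsym x (a*n) y).trans (B1 x y), B3 x y⟩⟩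
end

section
/- In a Novikov algebra A, the commutative center K(A) = {k : [k,a] = 0 for all a} coincides with the center Z(A) = N(A) ∩ K(A); equivalently, every element commuting with all of A lies in the nucleus. -/
/-- Lemma 3, part 3: in a Novikov algebra, `K(A) = Z(A)`, i.e. every element
commuting with all of `A` lies in the nucleus. -/
theorem novikov_commCenter_subset_nucleus {A : Type*} [NonUnitalNonAssocRing A]
    (hsym : ∀ a b c : A, asc a b c = asc b a c)
    (hrc : ∀ a b c : A, a * b * c = a * c * b)
    (k : A) (hk : ∀ a : A, k * a = a * k) :
    inNuc k := by
  have h1 : ∀ a b : A, asc k a b = 0 := by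
    intro a b
    unfold asc
    rw [hk (a * b), hrc a b k, ← hk a, sub_self]
  intro a b
  have h2 : asc a k b = 0 := by rw [hsym a k b]; exact h1 a b
  refine ⟨h1 a b, h2, ?_⟩
  unfold asc at h2 ⊢
  rw [hrc a b k, ← hk b]
  exact h2
end

section
/- The center Z(A) = N(A) ∩ K(A) of a Novikov algebra A is a two-sided ideal of A. -/
theorem asc_eq_zero_iff {A : Type*} [NonUnitalNonAssocRing A] (a b c : A) :
    asc a b c = 0 ↔ a * b * c = a * (b * c) := by
  simp [asc, sub_eq_zero]

theorem nov_mul_mem {A : Type*} [NonUnitalNonAssocRing A]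
    (hrc : ∀ a b c : A, a * b * c = a * c * b)
    (z : A) (hn : inNuc z) (hc : ∀ a : A, z * a = a * z) (b : A) :
    inNuc (z * b) ∧ ∀ a : A, (z * b) * a = a * (z * b) := by
  have n1 : ∀ u v : A, z * u * v = z * (u * v) := fun u v =>
    (asc_eq_zero_iff z u v).mp ((hn u v).1)
  have n2 : ∀ u v : A, u * z * v = u * (z * v) := fun u v =>
    (asc_eq_zero_iff u z v).mp ((hn u v).2.1)
  -- z commutes past products on either side
  have star : ∀ u v : A, z * (u * v) = z * (v * u) := by
    intro u v
    rw [← n1, hrc, n1]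
  have swap2 : ∀ u v w : A, z * (u * v * w) = z * (v * u * w) := by
    intro u v w
    rw [← n1 (u * v) w, star u v, n1 (v * u) w]
  -- key: z annihilates associators
  have key : ∀ x y c : A, z * (x * (y * c)) = z * (x * y * c) := by
    intro x y c
    calc z * (x * (y * c)) = z * ((y * c) * x) := star x (y * c)
      _ = z * (y * c) * x := (n1 (y * c) x).symm
      _ = z * y * c * x := by rw [← n1 y c]
      _ = z * y * x * c := hrc (z * y) c x
      _ = z * (y * x) * c := by rw [n1 y x]
      _ = z * (x * y) * c := by rw [star y x]
      _ = z * (x * y * c) := n1 (x * y) c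
  -- products with z*b reduce to z * (b * _)
  have p1 : ∀ u : A, z * b * u = z * (b * u) := by
    intro u
    rw [hrc, n1, star]
  have p2 : ∀ u : A, u * (z * b) = z * (b * u) := by
    intro u
    rw [← n2, ← hc, n1, star]
  have p4 : ∀ u v : A, u * (z * v) = z * (u * v) := by
    intro u v
    rw [← n2, ← hc, n1]
  constructor
  · intro x y
    refine ⟨?_, ?_, ?_⟩
    · -- asc (z*b) x y = 0
      rw [asc_eq_zero_iff]
      calc z * b * x * y = z * (b * x) * y := by rw [p1 x]
        _ = z * (b * x * y) := n1 (b * x) y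
        _ = z * (b * (x * y)) := (key b x y).symm
        _ = z * b * (x * y) := (p1 (x * y)).symm
    · -- asc x (z*b) y = 0
      rw [asc_eq_zero_iff]
      calc x * (z * b) * y = z * (b * x) * y := by rw [p2 x]
        _ = z * (b * x * y) := n1 (b * x) y
        _ = z * (x * b * y) := swap2 b x y
        _ = z * (x * (b * y)) := (key x b y).symm
        _ = x * (z * (b * y)) := (p4 x (b * y)).symm
        _ = x * (z * b * y) := by rw [p1 y]
    · -- asc x y (z*b) = 0
      rw [asc_eq_zero_iff]
      calc x * y * (z * b) = z * (b * (x * y)) := p2 (x * y)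
        _ = z * (b * x * y) := key b x y
        _ = z * (x * b * y) := swap2 b x y
        _ = z * (x * (b * y)) := (key x b y).symm
        _ = x * (z * (b * y)) := (p4 x (b * y)).symm
        _ = x * (z * (b * y)) := rfl
        _ = x * (y * (z * b)) := by rw [p2 y]
  · intro a
    rw [p1, p2]

/-- Lemma 3, part 2: the center `Z(A) = N(A) ∩ K(A)` of a Novikov algebra
is a two-sided ideal. -/
theorem novikov_center_isIdeal {A : Type*} [NonUnitalNonAssocRing A]
    (hsym : ∀ a b c : A, asc a b c = asc b a c)
    (hrc : ∀ a b c : A, a * b * c = a * c * b) :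
    (inNuc (0 : A) ∧ ∀ a : A, (0 : A) * a = a * 0) ∧
    (∀ x y : A, (inNuc x ∧ ∀ a : A, x * a = a * x) → (inNuc y ∧ ∀ a : A, y * a = a * y) →
      inNuc (x + y) ∧ ∀ a : A, (x + y) * a = a * (x + y)) ∧
    (∀ x : A, (inNuc x ∧ ∀ a : A, x * a = a * x) → inNuc (-x) ∧ ∀ a : A, (-x) * a = a * (-x)) ∧
    (∀ z : A, (inNuc z ∧ ∀ a : A, z * a = a * z) → ∀ b : A,
      (inNuc (z * b) ∧ ∀ a : A, (z * b) * a = a * (z * b)) ∧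
      (inNuc (b * z) ∧ ∀ a : A, (b * z) * a = a * (b * z))) := by
  refine ⟨⟨fun a b => ?_, fun a => by simp⟩, fun x y hx hy => ⟨fun a b => ?_, fun a => ?_⟩,
    fun x hx => ⟨fun a b => ?_, fun a => ?_⟩, fun z hz b => ?_⟩
  · refine ⟨?_, ?_, ?_⟩ <;> simp [asc]
  · obtain ⟨h1, h2, h3⟩ := hx.1 a b
    obtain ⟨g1, g2, g3⟩ := hy.1 a b
    refine ⟨?_, ?_, ?_⟩
    · have : asc (x + y) a b = asc x a b + asc y a b := by
        simp only [asc, add_mul]; abel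
      rw [this, h1, g1, add_zero]
    · have : asc a (x + y) b = asc a x b + asc a y b := by
        simp only [asc, add_mul, mul_add]; abel
      rw [this, h2, g2, add_zero]
    · have : asc a b (x + y) = asc a b x + asc a b y := by
        simp only [asc, mul_add]; abel
      rw [this, h3, g3, add_zero]
  · rw [add_mul, mul_add, hx.2 a, hy.2 a]
  · obtain ⟨h1, h2, h3⟩ := hx.1 a b
    refine ⟨?_, ?_, ?_⟩
    · have : asc (-x) a b = -asc x a b := by
        simp only [asc, neg_mul]; abel
      rw [this, h1, neg_zero]
    · have : asc a (-x) b = -asc a x b := by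
        simp only [asc, neg_mul, mul_neg]; abel
      rw [this, h2, neg_zero]
    · have : asc a b (-x) = -asc a b x := by
        simp only [asc, mul_neg]; abel
      rw [this, h3, neg_zero]
  · rw [neg_mul, mul_neg, hx.2 a]
  · have main := nov_mul_mem hrc z hz.1 hz.2 b
    refine ⟨main, ?_⟩
    rw [← hz.2 b]
    exact main
end

section
/- If A is a prime Novikov algebra that is not associative, then its nucleus N(A) is zero (and hence its center Z(A) is zero). -/
private theorem keyT1 {A : Type*} [NonUnitalNonAssocRing A]
    (hsym : ∀ a b c : A, asc a b c = asc b a c)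
    (hrc : ∀ a b c : A, a * b * c = a * c * b)
    {n : A} (hn : inNuc n) (x y z : A) : asc (n * x) y z = 0 := by
  have sym' : ∀ a b c : A, a * b * c - a * (b * c) = b * a * c - b * (a * c) := by
    intro a b c; simpa only [asc] using hsym a b c
  have e1 : ∀ a b : A, n * a * b = n * (a * b) := fun a b => by
    have h := (hn a b).1; simp only [asc] at h; exact sub_eq_zero.mp h
  have e2 : ∀ a b : A, a * n * b = a * (n * b) := fun a b => by
    have h := (hn a b).2.1; simp only [asc] at h; exact sub_eq_zero.mp h
  have e3 : ∀ a b : A, a * b * n = a * (b * n) := fun a b => by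
    have h := (hn a b).2.2; simp only [asc] at h; exact sub_eq_zero.mp h
  show (((n * x) * y) * z - (n * x) * (y * z) : A) = 0
  have r0 : ((((n * x) * y) * z - (n * x) * (y * z)) - ((y * (n * x)) * z - y * ((n * x) * z)) : A) = 0 := sub_eq_zero_of_eq (sym' (n * x) y z)
  have r1 : ((((n * y) * x) * z - (n * y) * (x * z)) - ((x * (n * y)) * z - x * ((n * y) * z)) : A) = 0 := sub_eq_zero_of_eq (sym' (n * y) x z)
  have r2 : ((((n * z) * x) * y - (n * z) * (x * y)) - ((x * (n * z)) * y - x * ((n * z) * y)) : A) = 0 := sub_eq_zero_of_eq (sym' (n * z) x y)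
  have r3 : ((((n * z) * y) * x - (n * z) * (y * x)) - ((y * (n * z)) * x - y * ((n * z) * x)) : A) = 0 := sub_eq_zero_of_eq (sym' (n * z) y x)
  have r4 : ((((x * y) * n) * z - (x * y) * (n * z)) - ((n * (x * y)) * z - n * ((x * y) * z)) : A) = 0 := sub_eq_zero_of_eq (sym' (x * y) n z)
  have r5 : ((((y * x) * n) * z - (y * x) * (n * z)) - ((n * (y * x)) * z - n * ((y * x) * z)) : A) = 0 := sub_eq_zero_of_eq (sym' (y * x) n z)
  have r6 : ((((x * z) * n) * y - (x * z) * (n * y)) - ((n * (x * z)) * y - n * ((x * z) * y)) : A) = 0 := sub_eq_zero_of_eq (sym' (x * z) n y)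
  have r7 : ((((y * z) * n) * x - (y * z) * (n * x)) - ((n * (y * z)) * x - n * ((y * z) * x)) : A) = 0 := sub_eq_zero_of_eq (sym' (y * z) n x)
  have r8 : ((((n * y) * z) * x - (n * (y * z)) * x) - (((y * n) * z) * x - (y * (n * z)) * x) : A) = 0 := by rw [← sub_mul, ← sub_mul, sym' n y z, sub_self]
  have r9 : (((n * y) * x) * z - ((n * y) * z) * x : A) = 0 := sub_eq_zero_of_eq (hrc (n * y) x z)
  have r10 : (((n * z) * x) * y - ((n * z) * y) * x : A) = 0 := sub_eq_zero_of_eq (hrc (n * z) x y)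
  have r11 : (((x * y) * n) * z - ((x * y) * z) * n : A) = 0 := sub_eq_zero_of_eq (hrc (x * y) n z)
  have r12 : (((y * x) * n) * z - ((y * x) * z) * n : A) = 0 := sub_eq_zero_of_eq (hrc (y * x) n z)
  have r13 : (((x * z) * n) * y - ((x * z) * y) * n : A) = 0 := sub_eq_zero_of_eq (hrc (x * z) n y)
  have r14 : (((y * z) * n) * x - ((y * z) * x) * n : A) = 0 := sub_eq_zero_of_eq (hrc (y * z) n x)
  have r15 : ((y * (n * x)) * z - (y * z) * (n * x) : A) = 0 := sub_eq_zero_of_eq (hrc y (n * x) z)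
  have r16 : ((x * (n * y)) * z - (x * z) * (n * y) : A) = 0 := sub_eq_zero_of_eq (hrc x (n * y) z)
  have r17 : ((x * (n * z)) * y - (x * y) * (n * z) : A) = 0 := sub_eq_zero_of_eq (hrc x (n * z) y)
  have r18 : ((y * (n * z)) * x - (y * x) * (n * z) : A) = 0 := sub_eq_zero_of_eq (hrc y (n * z) x)
  have r19 : ((n * (x * y)) * z - (n * z) * (x * y) : A) = 0 := sub_eq_zero_of_eq (hrc n (x * y) z)
  have r20 : ((n * (y * x)) * z - (n * z) * (y * x) : A) = 0 := sub_eq_zero_of_eq (hrc n (y * x) z)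
  have r21 : ((n * (x * z)) * y - (n * y) * (x * z) : A) = 0 := sub_eq_zero_of_eq (hrc n (x * z) y)
  have r22 : (n * ((x * y) * z) - n * ((x * z) * y) : A) = 0 := by rw [hrc x y z, sub_self]
  have r23 : (((x * y) * z) * n - ((x * z) * y) * n : A) = 0 := by rw [hrc x y z, sub_self]
  have r24 : (n * ((y * x) * z) - n * ((y * z) * x) : A) = 0 := by rw [hrc y x z, sub_self]
  have r25 : (((y * x) * z) * n - ((y * z) * x) * n : A) = 0 := by rw [hrc y x z, sub_self]
  have r26 : (x * ((n * y) * z) - x * ((n * z) * y) : A) = 0 := by rw [hrc n y z, sub_self]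
  have r27 : (((y * n) * z) * x - ((y * z) * n) * x : A) = 0 := by rw [hrc y n z, sub_self]
  have r28 : (y * ((n * x) * z) - y * ((n * z) * x) : A) = 0 := by rw [hrc n x z, sub_self]
  have r29 : (((n * (y * x)) * z) - (n * ((y * x) * z)) : A) = 0 := sub_eq_zero_of_eq (e1 (y * x) z)
  have expand : (((n * x) * y) * z - (n * x) * (y * z) : A) = ((((n * x) * y) * z - (n * x) * (y * z)) - ((y * (n * x)) * z - y * ((n * x) * z))) + -((((n * y) * x) * z - (n * y) * (x * z)) - ((x * (n * y)) * z - x * ((n * y) * z))) + ((((n * z) * x) * y - (n * z) * (x * y)) - ((x * (n * z)) * y - x * ((n * z) * y))) + -((((n * z) * y) * x - (n * z) * (y * x)) - ((y * (n * z)) * x - y * ((n * z) * x))) + -((((x * y) * n) * z - (x * y) * (n * z)) - ((n * (x * y)) * z - n * ((x * y) * z))) + (2 : ℤ) • ((((y * x) * n) * z - (y * x) * (n * z)) - ((n * (y * x)) * z - n * ((y * x) * z))) + ((((x * z) * n) * y - (x * z) * (n * y)) - ((n * (x * z)) * y - n * ((x * z) * y))) + -((((y * z) * n) * x - (y * z)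 * (n * x)) - ((n * (y * z)) * x - n * ((y * z) * x))) + ((((n * y) * z) * x - (n * (y * z)) * x) - (((y * n) * z) * x - (y * (n * z)) * x)) + (((n * y) * x) * z - ((n * y) * z) * x) + -(((n * z) * x) * y - ((n * z) * y) * x) + (((x * y) * n) * z - ((x * y) * z) * n) + (-2 : ℤ) • (((y * x) * n) * z - ((y * x) * z) * n) + -(((x * z) * n) * y - ((x * z) * y) * n) + (2 : ℤ) • (((y * z) * n) * x - ((y * z) * x) * n) + ((y * (n * x)) * z - (y * z) * (n * x)) + -((x * (n * y)) * z - (x * z) * (n * y)) + ((x * (n * z)) * y - (x * y) * (n * z)) + (-2 : ℤ) • ((y * (n * z)) * x - (y * x) * (n * z)) + -((n * (x * y)) * z - (n * z) * (x * y)) + ((n * (y * x)) * z - (n * z) * (y * x)) + ((n * (x * z)) * y - (n * y) * (x * z)) + (n * ((x * y) * z) - n * ((x * z) * y)) + (((x * y) * z) * n - ((x * z) * y) * n) + -(n * ((y * x) * z) - n * ((y * z) * x)) + (-2 : ℤ) • (((y * x) * z) * n - ((y * z) * x) * n) + (x * ((n * y) * z) - x * ((n * z) * y)) + (((y * n) *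 z) * x - ((y * z) * n) * x) + -(y * ((n * x) * z) - y * ((n * z) * x)) + (((n * (y * x)) * z) - (n * ((y * x) * z))) := by abel
  rw [expand, r0, r1, r2, r3, r4, r5, r6, r7, r8, r9, r10, r11, r12, r13, r14, r15, r16, r17, r18, r19, r20, r21, r22, r23, r24, r25, r26, r27, r28, r29]
  simp

private theorem keyT3 {A : Type*} [NonUnitalNonAssocRing A]
    (hsym : ∀ a b c : A, asc a b c = asc b a c)
    (hrc : ∀ a b c : A, a * b * c = a * c * b)
    {n : A} (hn : inNuc n) (x y z : A) : asc y z (n * x) = 0 := by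
  have sym' : ∀ a b c : A, a * b * c - a * (b * c) = b * a * c - b * (a * c) := by
    intro a b c; simpa only [asc] using hsym a b c
  have e1 : ∀ a b : A, n * a * b = n * (a * b) := fun a b => by
    have h := (hn a b).1; simp only [asc] at h; exact sub_eq_zero.mp h
  have e2 : ∀ a b : A, a * n * b = a * (n * b) := fun a b => by
    have h := (hn a b).2.1; simp only [asc] at h; exact sub_eq_zero.mp h
  have e3 : ∀ a b : A, a * b * n = a * (b * n) := fun a b => by
    have h := (hn a b).2.2; simp only [asc] at h; exact sub_eq_zero.mp h
  show ((y * z) * (n * x) - y * (z * (n * x)) : A) = 0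
  have r0 : ((((n * y) * x) * z - (n * y) * (x * z)) - ((x * (n * y)) * z - x * ((n * y) * z)) : A) = 0 := sub_eq_zero_of_eq (sym' (n * y) x z)
  have r1 : ((((n * y) * z) * x - (n * y) * (z * x)) - ((z * (n * y)) * x - z * ((n * y) * x)) : A) = 0 := sub_eq_zero_of_eq (sym' (n * y) z x)
  have r2 : ((((n * z) * x) * y - (n * z) * (x * y)) - ((x * (n * z)) * y - x * ((n * z) * y)) : A) = 0 := sub_eq_zero_of_eq (sym' (n * z) x y)
  have r3 : ((((n * z) * y) * x - (n * z) * (y * x)) - ((y * (n * z)) * x - y * ((n * z) * x)) : A) = 0 := sub_eq_zero_of_eq (sym' (n * z) y x)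
  have r4 : ((((z * n) * y) * x - (z * n) * (y * x)) - ((y * (z * n)) * x - y * ((z * n) * x)) : A) = 0 := sub_eq_zero_of_eq (sym' (z * n) y x)
  have r5 : ((((x * y) * n) * z - (x * y) * (n * z)) - ((n * (x * y)) * z - n * ((x * y) * z)) : A) = 0 := sub_eq_zero_of_eq (sym' (x * y) n z)
  have r6 : ((((x * z) * n) * y - (x * z) * (n * y)) - ((n * (x * z)) * y - n * ((x * z) * y)) : A) = 0 := sub_eq_zero_of_eq (sym' (x * z) n y)
  have r7 : ((((z * x) * n) * y - (z * x) * (n * y)) - ((n * (z * x)) * y - n * ((z * x) * y)) : A) = 0 := sub_eq_zero_of_eq (sym' (z * x) n y)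
  have r8 : ((((y * z) * n) * x - (y * z) * (n * x)) - ((n * (y * z)) * x - n * ((y * z) * x)) : A) = 0 := sub_eq_zero_of_eq (sym' (y * z) n x)
  have r9 : (((n * z) * (y * x) - n * (z * (y * x))) - ((z * n) * (y * x) - z * (n * (y * x))) : A) = 0 := sub_eq_zero_of_eq (sym' n z (y * x))
  have r10 : (((n * y) * (z * x) - n * (y * (z * x))) - ((y * n) * (z * x) - y * (n * (z * x))) : A) = 0 := sub_eq_zero_of_eq (sym' n y (z * x))
  have r11 : ((n * ((y * z) * x) - n * (y * (z * x))) - (n * ((z * y) * x) - n * (z * (y * x))) : A) = 0 := by rw [← mul_sub, ← mul_sub, sym' y z x, sub_self]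
  have r12 : ((((y * z) * x) * n - (y * (z * x)) * n) - (((z * y) * x) * n - (z * (y * x)) * n) : A) = 0 := by rw [← sub_mul, ← sub_mul, sym' y z x, sub_self]
  have r13 : ((((n * y) * z) * x - (n * (y * z)) * x) - (((y * n) * z) * x - (y * (n * z)) * x) : A) = 0 := by rw [← sub_mul, ← sub_mul, sym' n y z, sub_self]
  have r14 : ((y * ((n * z) * x) - y * (n * (z * x))) - (y * ((z * n) * x) - y * (z * (n * x))) : A) = 0 := by rw [← mul_sub, ← mul_sub, sym' n z x, sub_self]
  have r15 : (((n * y) * x) * z - ((n * y) * z) * x : A) = 0 := sub_eq_zero_of_eq (hrc (n * y) x z)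
  have r16 : (((n * z) * x) * y - ((n * z) * y) * x : A) = 0 := sub_eq_zero_of_eq (hrc (n * z) x y)
  have r17 : (((x * y) * n) * z - ((x * y) * z) * n : A) = 0 := sub_eq_zero_of_eq (hrc (x * y) n z)
  have r18 : (((x * z) * n) * y - ((x * z) * y) * n : A) = 0 := sub_eq_zero_of_eq (hrc (x * z) n y)
  have r19 : (((z * x) * n) * y - ((z * x) * y) * n : A) = 0 := sub_eq_zero_of_eq (hrc (z * x) n y)
  have r20 : (((y * z) * n) * x - ((y * z) * x) * n : A) = 0 := sub_eq_zero_of_eq (hrc (y * z) n x)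
  have r21 : (((z * y) * n) * x - ((z * y) * x) * n : A) = 0 := sub_eq_zero_of_eq (hrc (z * y) n x)
  have r22 : ((x * (n * y)) * z - (x * z) * (n * y) : A) = 0 := sub_eq_zero_of_eq (hrc x (n * y) z)
  have r23 : ((z * (n * y)) * x - (z * x) * (n * y) : A) = 0 := sub_eq_zero_of_eq (hrc z (n * y) x)
  have r24 : ((x * (n * z)) * y - (x * y) * (n * z) : A) = 0 := sub_eq_zero_of_eq (hrc x (n * z) y)
  have r25 : ((y * (z * n)) * x - (y * x) * (z * n) : A) = 0 := sub_eq_zero_of_eq (hrc y (z * n) x)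
  have r26 : ((n * (x * y)) * z - (n * z) * (x * y) : A) = 0 := sub_eq_zero_of_eq (hrc n (x * y) z)
  have r27 : ((z * (y * x)) * n - (z * n) * (y * x) : A) = 0 := sub_eq_zero_of_eq (hrc z (y * x) n)
  have r28 : ((n * (x * z)) * y - (n * y) * (x * z) : A) = 0 := sub_eq_zero_of_eq (hrc n (x * z) y)
  have r29 : ((n * (z * x)) * y - (n * y) * (z * x) : A) = 0 := sub_eq_zero_of_eq (hrc n (z * x) y)
  have r30 : ((y * (z * x)) * n - (y * n) * (z * x) : A) = 0 := sub_eq_zero_of_eq (hrc y (z * x) n)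
  have r31 : (n * ((x * y) * z) - n * ((x * z) * y) : A) = 0 := by rw [hrc x y z, sub_self]
  have r32 : (((x * y) * z) * n - ((x * z) * y) * n : A) = 0 := by rw [hrc x y z, sub_self]
  have r33 : (((y * x) * z) * n - ((y * z) * x) * n : A) = 0 := by rw [hrc y x z, sub_self]
  have r34 : (n * ((z * x) * y) - n * ((z * y) * x) : A) = 0 := by rw [hrc z x y, sub_self]
  have r35 : (((z * x) * y) * n - ((z * y) * x) * n : A) = 0 := by rw [hrc z x y, sub_self]
  have r36 : (x * ((n * y) * z) - x * ((n * z) * y) : A) = 0 := by rw [hrc n y z, sub_self]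
  have r37 : (((y * n) * z) * x - ((y * z) * n) * x : A) = 0 := by rw [hrc y n z, sub_self]
  have r38 : (((z * n) * y) * x - ((z * y) * n) * x : A) = 0 := by rw [hrc z n y, sub_self]
  have r39 : (((n * z) * (y * x)) - (n * (z * (y * x))) : A) = 0 := sub_eq_zero_of_eq (e1 z (y * x))
  have r40 : (((n * (z * x)) * y) - (n * ((z * x) * y)) : A) = 0 := sub_eq_zero_of_eq (e1 (z * x) y)
  have r41 : ((((y * x) * z) * n) - ((y * x) * (z * n)) : A) = 0 := sub_eq_zero_of_eq (e3 (y * x) z)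
  have r42 : (z * ((n * y) * x) - z * (n * (y * x)) : A) = 0 := by rw [e1 y x, sub_self]
  have expand : ((y * z) * (n * x) - y * (z * (n * x)) : A) = ((((n * y) * x) * z - (n * y) * (x * z)) - ((x * (n * y)) * z - x * ((n * y) * z))) + (-2 : ℤ) • ((((n * y) * z) * x - (n * y) * (z * x)) - ((z * (n * y)) * x - z * ((n * y) * x))) + -((((n * z) * x) * y - (n * z) * (x * y)) - ((x * (n * z)) * y - x * ((n * z) * y))) + ((((n * z) * y) * x - (n * z) * (y * x)) - ((y * (n * z)) * x - y * ((n * z) * x))) + -((((z * n) * y) * x - (z * n) * (y * x)) - ((y * (z * n)) * x - y * ((z * n) * x))) + ((((x * y) * n) * z - (x * y) * (n * z)) - ((n * (x * y)) * z - n * ((x * y) * z))) + -((((x * z) * n) * y - (x * z) * (n * y)) - ((n * (x * z)) * y - n * ((x * z) * y))) + (2 : ℤ) • ((((z * x) * n) * y - (z * x) * (n * y)) - ((n * (z * x)) * y - n * ((z * x) * y))) + -((((y * z) * n) * x - (y * z) * (n * x)) - ((n * (y * z)) * x - n * ((y * z) * x))) + (2 : ℤ) • (((n * z) * (y * x) -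 n * (z * (y * x))) - ((z * n) * (y * x) - z * (n * (y * x)))) + -(((n * y) * (z * x) - n * (y * (z * x))) - ((y * n) * (z * x) - y * (n * (z * x)))) + ((n * ((y * z) * x) - n * (y * (z * x))) - (n * ((z * y) * x) - n * (z * (y * x)))) + ((((y * z) * x) * n - (y * (z * x)) * n) - (((z * y) * x) * n - (z * (y * x)) * n)) + ((((n * y) * z) * x - (n * (y * z)) * x) - (((y * n) * z) * x - (y * (n * z)) * x)) + -((y * ((n * z) * x) - y * (n * (z * x))) - (y * ((z * n) * x) - y * (z * (n * x)))) + -(((n * y) * x) * z - ((n * y) * z) * x) + (((n * z) * x) * y - ((n * z) * y) * x) + -(((x * y) * n) * z - ((x * y) * z) * n) + (((x * z) * n) * y - ((x * z) * y) * n) + (-2 : ℤ) • (((z * x) * n) * y - ((z * x) * y) * n) + (2 : ℤ) • (((y * z) * n) * x - ((y * z) * x) * n) + (((z * y) * n) * x - ((z * y) * x) * n) + ((x * (n * y)) * z - (x * z) * (n * y)) + (-2 : ℤ) • ((z * (n * y)) * x - (z * x) * (n * y)) + -((x * (n * z)) * y - (x * y) * (n * z)) + -((y * (z * n)) * x - (y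 * x) * (z * n)) + ((n * (x * y)) * z - (n * z) * (x * y)) + -((z * (y * x)) * n - (z * n) * (y * x)) + -((n * (x * z)) * y - (n * y) * (x * z)) + ((n * (z * x)) * y - (n * y) * (z * x)) + ((y * (z * x)) * n - (y * n) * (z * x)) + -(n * ((x * y) * z) - n * ((x * z) * y)) + -(((x * y) * z) * n - ((x * z) * y) * n) + -(((y * x) * z) * n - ((y * z) * x) * n) + -(n * ((z * x) * y) - n * ((z * y) * x)) + (-2 : ℤ) • (((z * x) * y) * n - ((z * y) * x) * n) + -(x * ((n * y) * z) - x * ((n * z) * y)) + (((y * n) * z) * x - ((y * z) * n) * x) + (((z * n) * y) * x - ((z * y) * n) * x) + -(((n * z) * (y * x)) - (n * (z * (y * x)))) + (((n * (z * x)) * y) - (n * ((z * x) * y))) + ((((y * x) * z) * n) - ((y * x) * (z * n))) + (2 : ℤ) • (z * ((n * y) * x) - z * (n * (y * x))) := by abel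
  rw [expand, r0, r1, r2, r3, r4, r5, r6, r7, r8, r9, r10, r11, r12, r13, r14, r15, r16, r17, r18, r19, r20, r21, r22, r23, r24, r25, r26, r27, r28, r29, r30, r31, r32, r33, r34, r35, r36, r37, r38, r39, r40, r41, r42]
  simp

private theorem keyT4 {A : Type*} [NonUnitalNonAssocRing A]
    (hsym : ∀ a b c : A, asc a b c = asc b a c)
    (hrc : ∀ a b c : A, a * b * c = a * c * b)
    {n : A} (hn : inNuc n) (x y z : A) : asc (x * n) y z = 0 := by
  have sym' : ∀ a b c : A, a * b * c - a * (b * c) = b * a * c - b * (a * c) := by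
    intro a b c; simpa only [asc] using hsym a b c
  have e1 : ∀ a b : A, n * a * b = n * (a * b) := fun a b => by
    have h := (hn a b).1; simp only [asc] at h; exact sub_eq_zero.mp h
  have e2 : ∀ a b : A, a * n * b = a * (n * b) := fun a b => by
    have h := (hn a b).2.1; simp only [asc] at h; exact sub_eq_zero.mp h
  have e3 : ∀ a b : A, a * b * n = a * (b * n) := fun a b => by
    have h := (hn a b).2.2; simp only [asc] at h; exact sub_eq_zero.mp h
  show (((x * n) * y) * z - (x * n) * (y * z) : A) = 0
  have r0 : ((((x * n) * y) * z - (x * n) * (y * z)) - ((y * (x * n)) * z - y * ((x * n) * z)) : A) = 0 := sub_eq_zero_of_eq (sym' (x * n) y z)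
  have r1 : ((((n * y) * x) * z - (n * y) * (x * z)) - ((x * (n * y)) * z - x * ((n * y) * z)) : A) = 0 := sub_eq_zero_of_eq (sym' (n * y) x z)
  have r2 : ((((y * n) * x) * z - (y * n) * (x * z)) - ((x * (y * n)) * z - x * ((y * n) * z)) : A) = 0 := sub_eq_zero_of_eq (sym' (y * n) x z)
  have r3 : ((((n * z) * x) * y - (n * z) * (x * y)) - ((x * (n * z)) * y - x * ((n * z) * y)) : A) = 0 := sub_eq_zero_of_eq (sym' (n * z) x y)
  have r4 : ((((n * z) * y) * x - (n * z) * (y * x)) - ((y * (n * z)) * x - y * ((n * z) * x)) : A) = 0 := sub_eq_zero_of_eq (sym' (n * z) y x)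
  have r5 : ((((x * y) * n) * z - (x * y) * (n * z)) - ((n * (x * y)) * z - n * ((x * y) * z)) : A) = 0 := sub_eq_zero_of_eq (sym' (x * y) n z)
  have r6 : ((((y * x) * n) * z - (y * x) * (n * z)) - ((n * (y * x)) * z - n * ((y * x) * z)) : A) = 0 := sub_eq_zero_of_eq (sym' (y * x) n z)
  have r7 : ((((x * z) * n) * y - (x * z) * (n * y)) - ((n * (x * z)) * y - n * ((x * z) * y)) : A) = 0 := sub_eq_zero_of_eq (sym' (x * z) n y)
  have r8 : ((((x * z) * y) * n - (x * z) * (y * n)) - ((y * (x * z)) * n - y * ((x * z) * n)) : A) = 0 := sub_eq_zero_of_eq (sym' (x * z) y n)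
  have r9 : ((((y * z) * x) * n - (y * z) * (x * n)) - ((x * (y * z)) * n - x * ((y * z) * n)) : A) = 0 := sub_eq_zero_of_eq (sym' (y * z) x n)
  have r10 : (((n * y) * (x * z) - n * (y * (x * z))) - ((y * n) * (x * z) - y * (n * (x * z))) : A) = 0 := sub_eq_zero_of_eq (sym' n y (x * z))
  have r11 : ((((x * y) * z) * n - (x * (y * z)) * n) - (((y * x) * z) * n - (y * (x * z)) * n) : A) = 0 := by rw [← sub_mul, ← sub_mul, sym' x y z, sub_self]
  have r12 : ((((n * y) * z) * x - (n * (y * z)) * x) - (((y * n) * z) * x - (y * (n * z)) * x) : A) = 0 := by rw [← sub_mul, ← sub_mul, sym' n y z, sub_self]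
  have r13 : (((n * y) * x) * z - ((n * y) * z) * x : A) = 0 := sub_eq_zero_of_eq (hrc (n * y) x z)
  have r14 : (((y * n) * x) * z - ((y * n) * z) * x : A) = 0 := sub_eq_zero_of_eq (hrc (y * n) x z)
  have r15 : (((n * z) * x) * y - ((n * z) * y) * x : A) = 0 := sub_eq_zero_of_eq (hrc (n * z) x y)
  have r16 : (((x * y) * n) * z - ((x * y) * z) * n : A) = 0 := sub_eq_zero_of_eq (hrc (x * y) n z)
  have r17 : (((y * x) * n) * z - ((y * x) * z) * n : A) = 0 := sub_eq_zero_of_eq (hrc (y * x) n z)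
  have r18 : (((x * z) * n) * y - ((x * z) * y) * n : A) = 0 := sub_eq_zero_of_eq (hrc (x * z) n y)
  have r19 : ((y * (x * n)) * z - (y * z) * (x * n) : A) = 0 := sub_eq_zero_of_eq (hrc y (x * n) z)
  have r20 : ((x * (n * y)) * z - (x * z) * (n * y) : A) = 0 := sub_eq_zero_of_eq (hrc x (n * y) z)
  have r21 : ((x * (y * n)) * z - (x * z) * (y * n) : A) = 0 := sub_eq_zero_of_eq (hrc x (y * n) z)
  have r22 : ((x * (n * z)) * y - (x * y) * (n * z) : A) = 0 := sub_eq_zero_of_eq (hrc x (n * z) y)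
  have r23 : ((y * (n * z)) * x - (y * x) * (n * z) : A) = 0 := sub_eq_zero_of_eq (hrc y (n * z) x)
  have r24 : ((n * (x * y)) * z - (n * z) * (x * y) : A) = 0 := sub_eq_zero_of_eq (hrc n (x * y) z)
  have r25 : ((n * (y * x)) * z - (n * z) * (y * x) : A) = 0 := sub_eq_zero_of_eq (hrc n (y * x) z)
  have r26 : ((n * (x * z)) * y - (n * y) * (x * z) : A) = 0 := sub_eq_zero_of_eq (hrc n (x * z) y)
  have r27 : ((y * (x * z)) * n - (y * n) * (x * z) : A) = 0 := sub_eq_zero_of_eq (hrc y (x * z) n)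
  have r28 : (n * ((x * y) * z) - n * ((x * z) * y) : A) = 0 := by rw [hrc x y z, sub_self]
  have r29 : (n * ((y * x) * z) - n * ((y * z) * x) : A) = 0 := by rw [hrc y x z, sub_self]
  have r30 : (((y * x) * z) * n - ((y * z) * x) * n : A) = 0 := by rw [hrc y x z, sub_self]
  have r31 : (x * ((n * y) * z) - x * ((n * z) * y) : A) = 0 := by rw [hrc n y z, sub_self]
  have r32 : (x * ((y * n) * z) - x * ((y * z) * n) : A) = 0 := by rw [hrc y n z, sub_self]
  have r33 : (y * ((n * x) * z) - y * ((n * z) * x) : A) = 0 := by rw [hrc n x z, sub_self]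
  have r34 : (y * ((x * n) * z) - y * ((x * z) * n) : A) = 0 := by rw [hrc x n z, sub_self]
  have r35 : (((n * (y * x)) * z) - (n * ((y * x) * z)) : A) = 0 := sub_eq_zero_of_eq (e1 (y * x) z)
  have r36 : (((n * y) * (x * z)) - (n * (y * (x * z))) : A) = 0 := sub_eq_zero_of_eq (e1 y (x * z))
  have r37 : (((n * (y * z)) * x) - (n * ((y * z) * x)) : A) = 0 := sub_eq_zero_of_eq (e1 (y * z) x)
  have r38 : (y * ((n * x) * z) - y * (n * (x * z)) : A) = 0 := by rw [e1 x z, sub_self]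
  have expand : (((x * n) * y) * z - (x * n) * (y * z) : A) = ((((x * n) * y) * z - (x * n) * (y * z)) - ((y * (x * n)) * z - y * ((x * n) * z))) + -((((n * y) * x) * z - (n * y) * (x * z)) - ((x * (n * y)) * z - x * ((n * y) * z))) + ((((y * n) * x) * z - (y * n) * (x * z)) - ((x * (y * n)) * z - x * ((y * n) * z))) + ((((n * z) * x) * y - (n * z) * (x * y)) - ((x * (n * z)) * y - x * ((n * z) * y))) + -((((n * z) * y) * x - (n * z) * (y * x)) - ((y * (n * z)) * x - y * ((n * z) * x))) + -((((x * y) * n) * z - (x * y) * (n * z)) - ((n * (x * y)) * z - n * ((x * y) * z))) + (2 : ℤ) • ((((y * x) * n) * z - (y * x) * (n * z)) - ((n * (y * x)) * z - n * ((y * x) * z))) + ((((x * z) * n) * y - (x * z) * (n * y)) - ((n * (x * z)) * y - n * ((x * z) * y))) + -((((x * z) * y) * n - (x * z) * (y * n)) - ((y * (x * z)) * n - y * ((x * z) * n))) + -((((y * z) * x) * n - (y * z) * (x * n)) - ((x * (y * z)) * n - x * ((y * z) * n))) + (((n * y) * (x * z) - n * (y * (x * z))) - ((y * n) * (x * z)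 - y * (n * (x * z)))) + ((((x * y) * z) * n - (x * (y * z)) * n) - (((y * x) * z) * n - (y * (x * z)) * n)) + ((((n * y) * z) * x - (n * (y * z)) * x) - (((y * n) * z) * x - (y * (n * z)) * x)) + (((n * y) * x) * z - ((n * y) * z) * x) + -(((y * n) * x) * z - ((y * n) * z) * x) + -(((n * z) * x) * y - ((n * z) * y) * x) + (((x * y) * n) * z - ((x * y) * z) * n) + (-2 : ℤ) • (((y * x) * n) * z - ((y * x) * z) * n) + -(((x * z) * n) * y - ((x * z) * y) * n) + ((y * (x * n)) * z - (y * z) * (x * n)) + -((x * (n * y)) * z - (x * z) * (n * y)) + ((x * (y * n)) * z - (x * z) * (y * n)) + ((x * (n * z)) * y - (x * y) * (n * z)) + (-2 : ℤ) • ((y * (n * z)) * x - (y * x) * (n * z)) + -((n * (x * y)) * z - (n * z) * (x * y)) + ((n * (y * x)) * z - (n * z) * (y * x)) + ((n * (x * z)) * y - (n * y) * (x * z)) + (-2 : ℤ) • ((y * (x * z)) * n - (y * n) * (x * z)) + (n * ((x * y) * z) - n * ((x * z) * y)) + -(n * ((y * x) * z) - n * ((y * z) * x)) + -(((y * x) *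 z) * n - ((y * z) * x) * n) + (x * ((n * y) * z) - x * ((n * z) * y)) + -(x * ((y * n) * z) - x * ((y * z) * n)) + -(y * ((n * x) * z) - y * ((n * z) * x)) + -(y * ((x * n) * z) - y * ((x * z) * n)) + (((n * (y * x)) * z) - (n * ((y * x) * z))) + -(((n * y) * (x * z)) - (n * (y * (x * z)))) + (((n * (y * z)) * x) - (n * ((y * z) * x))) + (y * ((n * x) * z) - y * (n * (x * z))) := by abel
  rw [expand, r0, r1, r2, r3, r4, r5, r6, r7, r8, r9, r10, r11, r12, r13, r14, r15, r16, r17, r18, r19, r20, r21, r22, r23, r24, r25, r26, r27, r28, r29, r30, r31, r32, r33, r34, r35, r36, r37, r38]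
  simp

private theorem keyT6 {A : Type*} [NonUnitalNonAssocRing A]
    (hsym : ∀ a b c : A, asc a b c = asc b a c)
    (hrc : ∀ a b c : A, a * b * c = a * c * b)
    {n : A} (hn : inNuc n) (x y z : A) : asc y z (x * n) = 0 := by
  have e2 : ∀ a b : A, a * n * b = a * (n * b) := fun a b => by
    have h := (hn a b).2.1; simp only [asc] at h; exact sub_eq_zero.mp h
  have e3 : ∀ a b : A, a * b * n = a * (b * n) := fun a b => by
    have h := (hn a b).2.2; simp only [asc] at h; exact sub_eq_zero.mp h
  have hc : ∀ a b : A, a * (n * b) = a * (b * n) := fun a b => by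
    rw [← e2 a b, hrc a n b, e3 a b]
  have h3 := keyT3 hsym hrc hn x y z
  simp only [asc] at h3 ⊢
  rw [← hc (y * z) x, ← hc z x]
  exact h3

private theorem nuc_mul {A : Type*} [NonUnitalNonAssocRing A]
    (hsym : ∀ a b c : A, asc a b c = asc b a c)
    (hrc : ∀ a b c : A, a * b * c = a * c * b)
    {n : A} (hn : inNuc n) (x : A) : inNuc (n * x) ∧ inNuc (x * n) := by
  constructor
  · intro a b
    exact ⟨keyT1 hsym hrc hn x a b, (hsym (n * x) a b) ▸ keyT1 hsym hrc hn x a b,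
      keyT3 hsym hrc hn x a b⟩
  · intro a b
    exact ⟨keyT4 hsym hrc hn x a b, (hsym (x * n) a b) ▸ keyT4 hsym hrc hn x a b,
      keyT6 hsym hrc hn x a b⟩

/-- Theorem 1: a prime nonassociative Novikov algebra has zero nucleus
(and hence zero center). -/
theorem novikov_prime_nonassoc_nucleus_zero {A : Type*} [NonUnitalNonAssocRing A]
    (hsym : ∀ a b c : A, asc a b c = asc b a c)
    (hrc : ∀ a b c : A, a * b * c = a * c * b)
    (hprime : ∀ I J : AddSubgroup A,
      (∀ i ∈ I, ∀ a : A, a * i ∈ I ∧ i * a ∈ I) →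
      (∀ j ∈ J, ∀ a : A, a * j ∈ J ∧ j * a ∈ J) →
      (∀ i ∈ I, ∀ j ∈ J, i * j = 0) → I = ⊥ ∨ J = ⊥)
    (hnonassoc : ∃ a b c : A, asc a b c ≠ 0) :
    ∀ n : A, inNuc n → n = 0 := by
  intro n hn
  -- the nucleus as an additive subgroup
  set I : AddSubgroup A :=
    { carrier := {m | inNuc m}
      zero_mem' := by intro a b; simp [asc]
      add_mem' := by
        intro p q hp hq a b
        obtain ⟨h1, h2, h3⟩ := hp a b
        obtain ⟨g1, g2, g3⟩ := hq a b
        simp only [asc] at h1 h2 h3 g1 g2 g3 ⊢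
        refine ⟨?_, ?_, ?_⟩
        · have : (p + q) * a * b - (p + q) * (a * b)
              = (p * a * b - p * (a * b)) + (q * a * b - q * (a * b)) := by
            simp only [add_mul]; abel
          rw [this, h1, g1, add_zero]
        · have : a * (p + q) * b - a * ((p + q) * b)
              = (a * p * b - a * (p * b)) + (a * q * b - a * (q * b)) := by
            simp only [add_mul, mul_add]; abel
          rw [this, h2, g2, add_zero]
        · have : a * b * (p + q) - a * (b * (p + q))
              = (a * b * p - a * (b * p)) + (a * b * q - a * (b * q)) := by
            simp only [mul_add]; abel
          rw [this, h3, g3, add_zero]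
      neg_mem' := by
        intro p hp a b
        obtain ⟨h1, h2, h3⟩ := hp a b
        simp only [asc] at h1 h2 h3 ⊢
        refine ⟨?_, ?_, ?_⟩
        · have : (-p) * a * b - (-p) * (a * b) = -(p * a * b - p * (a * b)) := by
            simp only [neg_mul]; abel
          rw [this, h1, neg_zero]
        · have : a * (-p) * b - a * ((-p) * b) = -(a * p * b - a * (p * b)) := by
            simp only [neg_mul, mul_neg]; abel
          rw [this, h2, neg_zero]
        · have : a * b * (-p) - a * (b * (-p)) = -(a * b * p - a * (b * p)) := by
            simp only [mul_neg]; abel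
          rw [this, h3, neg_zero] } with hIdef
  -- the (left) annihilator of the nucleus
  set J : AddSubgroup A :=
    { carrier := {j | ∀ m : A, inNuc m → m * j = 0}
      zero_mem' := by intro m _; exact mul_zero m
      add_mem' := by
        intro p q hp hq m hm
        rw [mul_add, hp m hm, hq m hm, add_zero]
      neg_mem' := by
        intro p hp m hm
        rw [mul_neg, hp m hm, neg_zero] } with hJdef
  have hI : ∀ i ∈ I, ∀ a : A, a * i ∈ I ∧ i * a ∈ I := by
    intro i hi a
    exact ⟨(nuc_mul hsym hrc hi a).2, (nuc_mul hsym hrc hi a).1⟩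
  have hJ : ∀ j ∈ J, ∀ a : A, a * j ∈ J ∧ j * a ∈ J := by
    intro j hj a
    constructor
    · intro m hm
      have e1 : m * a * j = m * (a * j) := by
        have h := (hm a j).1; simp only [asc] at h; exact sub_eq_zero.mp h
      rw [← e1, hj (m * a) (nuc_mul hsym hrc hm a).1]
    · intro m hm
      have e1 : m * j * a = m * (j * a) := by
        have h := (hm j a).1; simp only [asc] at h; exact sub_eq_zero.mp h
      rw [← e1, hj m hm, zero_mul]
  have hIJ : ∀ i ∈ I, ∀ j ∈ J, i * j = 0 := fun i hi j hj => hj i hi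
  rcases hprime I J hI hJ hIJ with hbot | hbot
  · have : n ∈ I := hn
    rw [hbot] at this
    exact AddSubgroup.mem_bot.mp this
  · exfalso
    obtain ⟨a, b, c, habc⟩ := hnonassoc
    apply habc
    have hmem : asc a b c ∈ J := by
      intro m hm
      have e1 : ∀ u v : A, m * u * v = m * (u * v) := fun u v => by
        have h := (hm u v).1; simp only [asc] at h; exact sub_eq_zero.mp h
      have : m * asc a b c = asc (m * a) b c := by
        simp only [asc, mul_sub]
        rw [← e1 (a * b) c, ← e1 a (b * c), ← e1 a b]
      rw [this]
      exact keyT1 hsym hrc hm a b c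
    rw [hbot] at hmem
    exact AddSubgroup.mem_bot.mp hmem
end

section
/- In a Novikov algebra, the product IJ of two two-sided ideals I and J (the span of products ij) is again a two-sided ideal. -/
/-!
Multiplication by a fixed element is additive, so it suffices to check that `a (ij)` and `(ij) a`
lie in `IJ` for `i ∈ I`, `j ∈ J`. Right commutativity gives `(ij)a = (ia)j`, and left symmetry of
the associator, `(a,i,j) = (i,a,j)`, gives `a(ij) = (ai)j - (ia)j + i(aj)`.
-/

namespace AddSubgroup

variable {A : Type*} [NonUnitalNonAssocRing A]

theorem mul_mem_closure_of_forall_mul_mem {S : Set A} (a : A)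
    (h : ∀ s ∈ S, a * s ∈ closure S) {x : A} (hx : x ∈ closure S) : a * x ∈ closure S :=
  (closure_le ((closure S).comap (AddMonoidHom.mulLeft a))).2 h hx

theorem mul_mem_closure_of_forall_mul_mem' {S : Set A} (a : A)
    (h : ∀ s ∈ S, s * a ∈ closure S) {x : A} (hx : x ∈ closure S) : x * a ∈ closure S :=
  (closure_le ((closure S).comap (AddMonoidHom.mulRight a))).2 h hx

def mulSpan (I J : AddSubgroup A) : AddSubgroup A :=
  closure {x : A | ∃ i ∈ I, ∃ j ∈ J, x = i * j}

theorem mul_mem_mulSpan {I J : AddSubgroup A} {i j : A} (hi : i ∈ I) (hj : j ∈ J) :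
    i * j ∈ I.mulSpan J :=
  subset_closure ⟨i, hi, j, hj, rfl⟩

end AddSubgroup

open AddSubgroup

section LeftSymmetric

variable {A : Type*} [NonUnitalNonAssocRing A]

theorem mul_mul_eq_of_asc_eq_asc {a b c : A} (h : asc a b c = asc b a c) :
    a * (b * c) = a * b * c - b * a * c + b * (a * c) := by
  unfold asc at h
  rw [sub_eq_sub_iff_sub_eq_sub] at h
  rw [h]
  abel

theorem mul_mem_mulSpan_of_asc_symm (hsym : ∀ a b c : A, asc a b c = asc b a c)
    {I J : AddSubgroup A} (hI : ∀ i ∈ I, ∀ a : A, a * i ∈ I ∧ i * a ∈ I)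
    (hJ : ∀ j ∈ J, ∀ a : A, a * j ∈ J) (a : A) {x : A} (hx : x ∈ I.mulSpan J) :
    a * x ∈ I.mulSpan J := by
  refine mul_mem_closure_of_forall_mul_mem a ?_ hx
  rintro _ ⟨i, hi, j, hj, rfl⟩
  rw [mul_mul_eq_of_asc_eq_asc (hsym a i j)]
  exact add_mem (sub_mem (mul_mem_mulSpan (hI i hi a).1 hj) (mul_mem_mulSpan (hI i hi a).2 hj))
    (mul_mem_mulSpan hi (hJ j hj a))

end LeftSymmetric

theorem mul_mem_mulSpan_of_right_comm {A : Type*} [NonUnitalNonAssocRing A]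
    (hrc : ∀ a b c : A, a * b * c = a * c * b)
    {I J : AddSubgroup A} (hI : ∀ i ∈ I, ∀ a : A, i * a ∈ I) (a : A) {x : A}
    (hx : x ∈ I.mulSpan J) : x * a ∈ I.mulSpan J := by
  refine mul_mem_closure_of_forall_mul_mem' a ?_ hx
  rintro _ ⟨i, hi, j, hj, rfl⟩
  rw [hrc]
  exact mul_mem_mulSpan (hI i hi a) hj

/-- In a Novikov algebra, the product (span of elementwise products) of two
two-sided ideals is again a two-sided ideal. -/
theorem novikov_ideal_mul_ideal_isIdeal {A : Type*} [NonUnitalNonAssocRing A]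
    (hsym : ∀ a b c : A, asc a b c = asc b a c)
    (hrc : ∀ a b c : A, a * b * c = a * c * b)
    (I J : AddSubgroup A)
    (hI : ∀ i ∈ I, ∀ a : A, a * i ∈ I ∧ i * a ∈ I)
    (hJ : ∀ j ∈ J, ∀ a : A, a * j ∈ J ∧ j * a ∈ J) :
    ∀ x ∈ AddSubgroup.closure {x : A | ∃ i ∈ I, ∃ j ∈ J, x = i * j}, ∀ a : A,
      a * x ∈ AddSubgroup.closure {x : A | ∃ i ∈ I, ∃ j ∈ J, x = i * j} ∧
      x * a ∈ AddSubgroup.closure {x : A | ∃ i ∈ I, ∃ j ∈ J, x = i * j} := fun x hx a =>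
  ⟨mul_mem_mulSpan_of_asc_symm hsym hI (fun j hj b => (hJ j hj b).1) a hx,
    mul_mem_mulSpan_of_right_comm hrc (fun i hi b => (hI i hi b).2) a hx⟩
end

section
/- Let A be a Novikov algebra, I a two-sided ideal of A, M an ideal of the algebra I, and a in A. Then Ma + M and aM + M are ideals of the algebra I. -/
/-- Lemma 5a: if `I ⊴ A` and `M ⊴ I`, then for any `a ∈ A`, the sets `Ma + M` and
`aM + M` are ideals of the algebra `I`. -/
theorem novikov_Ma_add_M_isIdeal {A : Type*} [NonUnitalNonAssocRing A]
    (hsym : ∀ a b c : A, asc a b c = asc b a c)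
    (hrc : ∀ a b c : A, a * b * c = a * c * b)
    (I : AddSubgroup A) (hI : ∀ i ∈ I, ∀ a : A, a * i ∈ I ∧ i * a ∈ I)
    (M : AddSubgroup A) (hMI : M ≤ I)
    (hM : ∀ m ∈ M, ∀ i ∈ I, i * m ∈ M ∧ m * i ∈ M)
    (a : A) :
    ({x : A | ∃ m ∈ M, ∃ m' ∈ M, x = m * a + m'} ⊆ (I : Set A) ∧
      ∀ w ∈ {x : A | ∃ m ∈ M, ∃ m' ∈ M, x = m * a + m'}, ∀ i ∈ I,
        i * w ∈ {x : A | ∃ m ∈ M, ∃ m' ∈ M, x = m * a + m'} ∧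
        w * i ∈ {x : A | ∃ m ∈ M, ∃ m' ∈ M, x = m * a + m'}) ∧
    ({x : A | ∃ m ∈ M, ∃ m' ∈ M, x = a * m + m'} ⊆ (I : Set A) ∧
      ∀ w ∈ {x : A | ∃ m ∈ M, ∃ m' ∈ M, x = a * m + m'}, ∀ i ∈ I,
        i * w ∈ {x : A | ∃ m ∈ M, ∃ m' ∈ M, x = a * m + m'} ∧
        w * i ∈ {x : A | ∃ m ∈ M, ∃ m' ∈ M, x = a * m + m'}) := by
  refine ⟨⟨?_, ?_⟩, ?_, ?_⟩
  · rintro x ⟨m, hm, m', hm', rfl⟩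
    exact I.add_mem (hI m (hMI hm) a).2 (hMI hm')
  · rintro w ⟨m, hm, m', hm', rfl⟩ i hi
    constructor
    · refine ⟨i * m - m * i, M.sub_mem (hM m hm i hi).1 (hM m hm i hi).2,
        m * (i * a) + i * m',
        M.add_mem (hM m hm (i * a) (hI i hi a).2).2 (hM m' hm' i hi).1, ?_⟩
      have h := hsym i m a
      simp only [asc] at h
      rw [mul_add, sub_mul, sub_eq_iff_eq_add.mp h]
      abel
    · refine ⟨m * i, (hM m hm i hi).2, m' * i, (hM m' hm' i hi).2, ?_⟩
      rw [add_mul, hrc]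
  · rintro x ⟨m, hm, m', hm', rfl⟩
    exact I.add_mem (hI m (hMI hm) a).1 (hMI hm')
  · rintro w ⟨m, hm, m', hm', rfl⟩ i hi
    constructor
    · refine ⟨i * m, (hM m hm i hi).1,
        (i * a) * m - (a * i) * m + i * m',
        M.add_mem (M.sub_mem (hM m hm (i * a) (hI i hi a).2).1
          (hM m hm (a * i) (hI i hi a).1).1) (hM m' hm' i hi).1, ?_⟩
      have h := hsym i a m
      simp only [asc] at h
      rw [mul_add, sub_eq_iff_eq_add.mp h]
      abel
    · refine ⟨0, M.zero_mem, (a * i) * m + m' * i,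
        M.add_mem (hM m hm (a * i) (hI i hi a).1).1 (hM m' hm' i hi).2, ?_⟩
      rw [add_mul, hrc, mul_zero, zero_add]
end

section
/- Let A be a Novikov algebra, I a two-sided ideal of A, and M an ideal of the algebra I. Then (MA)I² ⊆ M and (AM)I² ⊆ M, and consequently for any a in A, ((Ma)²)² ⊆ M and ((aM)²)² ⊆ M. -/
/-- The product of two additive subgroups: the span of elementwise products. -/
def sprod {A : Type*} [NonUnitalNonAssocRing A] (X Y : AddSubgroup A) : AddSubgroup A :=
  AddSubgroup.closure {x : A | ∃ u ∈ X, ∃ v ∈ Y, x = u * v}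

private lemma novikov_key {A : Type*} [NonUnitalNonAssocRing A]
    (hls : ∀ a b c : A, a * b * c - a * (b * c) = b * a * c - b * (a * c))
    (hrc : ∀ a b c : A, a * b * c = a * c * b)
    (m a i j : A) :
    (m * a) * (i * j) = - (m * (a * (i * j))) + ((m * (a * i)) * j) + ((m * (a * j)) * i) + (m * (i * (a * j))) - ((m * (i * a)) * j) := by
  have h1 := hls m a (i * j)
  have h2 := hrc m (a * i) j
  have h3 := hls m (a * i) j
  have h4 := hrc m (a * j) i
  have h5 := hls m i (a * j)
  have h6 := hrc m (i * a) j
  have h7 := hls m (i * a) j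
  have h8 := hrc (m * j) a i
  have h9 := hls (m * j) a i
  have h10 := hls (m * j) i a
  have h11 := hrc a m (i * j)
  have h12 := hrc a (m * j) i
  have h13 := hls a i (m * j)
  have h14 := hrc a (i * m) j
  have h15 := hls a (i * m) j
  have h16 := hrc (a * i) m j
  have h17 := hls (a * j) i m
  have h18 := hrc (i * m) a j
  have h19 := hrc i (m * j) a
  have h20 := hrc (i * a) m j
  have h21 := hrc (i * j) m a
  have h22 : m * (a * i * j) - m * (a * (i * j)) = m * (i * a * j) - m * (i * (a * j)) := by
    have := congrArg (fun t => m * t) (hls a i j)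
    simpa [mul_sub] using this
  have h23 : a * i * j * m = a * j * i * m := by rw [hrc a i j]
  have h24 : a * i * j * m - a * (i * j) * m = i * a * j * m - i * (a * j) * m := by
    have := congrArg (fun t => t * m) (hls a i j)
    simpa [sub_mul] using this
  have h25 : i * a * j * m = i * j * a * m := by rw [hrc i a j]
  have h26 : a * (m * i * j) = a * (m * j * i) := by rw [hrc m i j]
  have h27 : a * (m * i * j) - a * (m * (i * j)) = a * (i * m * j) - a * (i * (m * j)) := by
    have := congrArg (fun t => a * t) (hls m i j)
    simpa [mul_sub] using this
  have h28 : i * m * j * a = i * j * m * a := by rw [hrc i m j]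
  have h29 : i * (m * a * j) = i * (m * j * a) := by rw [hrc m a j]
  have h30 : i * (m * a * j) - i * (m * (a * j)) = i * (a * m * j) - i * (a * (m * j)) := by
    have := congrArg (fun t => i * t) (hls m a j)
    simpa [mul_sub] using this
  have h31 : i * (a * m * j) = i * (a * j * m) := by rw [hrc a m j]
  linear_combination (norm := abel1) h1 + h2 - h3 - h3 - h4 - h5 - h6 + h7 + h7 + h8 - h9 + h10 + h11 - h12 + h13 + h14 - h15 - h16 - h16 - h17 - h18 + h19 + h20 + h20 - h21 - h22 - h22 - h23 - h24 + h25 - h26 + h27 - h28 + h29 - h30 - h31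


private lemma sprod_le_iff {A : Type*} [NonUnitalNonAssocRing A] {X Y M : AddSubgroup A}
    (h : ∀ u ∈ X, ∀ v ∈ Y, u * v ∈ M) : sprod X Y ≤ M := by
  rw [sprod, AddSubgroup.closure_le]
  rintro x ⟨u, hu, v, hv, rfl⟩
  exact h u hu v hv

private lemma mem_sprod_of {A : Type*} [NonUnitalNonAssocRing A] {X Y : AddSubgroup A}
    {u v : A} (hu : u ∈ X) (hv : v ∈ Y) : u * v ∈ sprod X Y :=
  AddSubgroup.subset_closure ⟨u, hu, v, hv, rfl⟩

private lemma sprod_mono {A : Type*} [NonUnitalNonAssocRing A] {X X' Y Y' : AddSubgroup A}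
    (hX : X ≤ X') (hY : Y ≤ Y') : sprod X Y ≤ sprod X' Y' := by
  apply AddSubgroup.closure_mono
  rintro x ⟨u, hu, v, hv, rfl⟩
  exact ⟨u, hX hu, v, hY hv, rfl⟩

/-- Lemma 5 b)-e): `(MA)I² ⊆ M`, `(AM)I² ⊆ M`, `((Ma)²)² ⊆ M` and `((aM)²)² ⊆ M`. -/
theorem novikov_lemma5_inclusions {A : Type*} [NonUnitalNonAssocRing A]
    (hsym : ∀ a b c : A, asc a b c = asc b a c)
    (hrc : ∀ a b c : A, a * b * c = a * c * b)
    (I : AddSubgroup A) (hI : ∀ i ∈ I, ∀ a : A, a * i ∈ I ∧ i * a ∈ I)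
    (M : AddSubgroup A) (hMI : M ≤ I)
    (hM : ∀ m ∈ M, ∀ i ∈ I, i * m ∈ M ∧ m * i ∈ M) :
    sprod (sprod M ⊤) (sprod I I) ≤ M ∧
    sprod (sprod ⊤ M) (sprod I I) ≤ M ∧
    (∀ a : A,
      sprod (sprod (M.map (AddMonoidHom.mulRight a)) (M.map (AddMonoidHom.mulRight a)))
            (sprod (M.map (AddMonoidHom.mulRight a)) (M.map (AddMonoidHom.mulRight a))) ≤ M ∧
      sprod (sprod (M.map (AddMonoidHom.mulLeft a)) (M.map (AddMonoidHom.mulLeft a)))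
            (sprod (M.map (AddMonoidHom.mulLeft a)) (M.map (AddMonoidHom.mulLeft a))) ≤ M) := by
  have hls : ∀ a b c : A, a * b * c - a * (b * c) = b * a * c - b * (a * c) := hsym
  -- elementwise key: (m*a)*(i*j) ∈ M
  have keyMA : ∀ m ∈ M, ∀ a : A, ∀ i ∈ I, ∀ j ∈ I, (m * a) * (i * j) ∈ M := by
    intro m hm a i hi j hj
    rw [novikov_key hls hrc m a i j]
    have hai : a * i ∈ I := (hI i hi a).1
    have haj : a * j ∈ I := (hI j hj a).1
    have hia : i * a ∈ I := (hI i hi a).2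
    have hij : i * j ∈ I := (hI j hj i).1
    have haij : a * (i * j) ∈ I := (hI (i * j) hij a).1
    have hiaj : i * (a * j) ∈ I := (hI (a * j) haj i).1
    have t1 : m * (a * (i * j)) ∈ M := (hM m hm _ haij).2
    have t2 : (m * (a * i)) * j ∈ M := (hM _ (hM m hm _ hai).2 _ hj).2
    have t3 : (m * (a * j)) * i ∈ M := (hM _ (hM m hm _ haj).2 _ hi).2
    have t4 : m * (i * (a * j)) ∈ M := (hM m hm _ hiaj).2
    have t5 : (m * (i * a)) * j ∈ M := (hM _ (hM m hm _ hia).2 _ hj).2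
    exact M.sub_mem (M.add_mem (M.add_mem (M.add_mem (M.neg_mem t1) t2) t3) t4) t5
  -- part b) (MA)I^2 ⊆ M
  have part1 : sprod (sprod M ⊤) (sprod I I) ≤ M := by
    apply sprod_le_iff
    intro u hu
    refine AddSubgroup.closure_induction (p := fun u _ => ∀ v ∈ sprod I I, u * v ∈ M)
      ?_ ?_ ?_ ?_ hu
    · rintro x ⟨m, hm, a, -, rfl⟩ v hv
      refine AddSubgroup.closure_induction (p := fun v _ => (m * a) * v ∈ M)
        ?_ ?_ ?_ ?_ hv
      · rintro y ⟨i, hi, j, hj, rfl⟩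
        exact keyMA m hm a i hi j hj
      · simpa using M.zero_mem
      · intro y z _ _ hy hz
        rw [mul_add]; exact M.add_mem hy hz
      · intro y _ hy
        rw [mul_neg]; exact M.neg_mem hy
    · intro v _; simpa using M.zero_mem
    · intro x y _ _ hx hy v hv
      rw [add_mul]; exact M.add_mem (hx v hv) (hy v hv)
    · intro x _ hx v hv
      rw [neg_mul]; exact M.neg_mem (hx v hv)
  -- elementwise: (a*m)*(i*j) ∈ M
  have keyAM : ∀ m ∈ M, ∀ a : A, ∀ i ∈ I, ∀ j ∈ I, (a * m) * (i * j) ∈ M := by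
    intro m hm a i hi j hj
    have hij : i * j ∈ I := (hI j hj i).1
    have : a * m * (i * j) = a * (i * j) * m := hrc a m (i * j)
    rw [this]
    exact (hM m hm _ (hI (i * j) hij a).1).1
  have part2 : sprod (sprod ⊤ M) (sprod I I) ≤ M := by
    apply sprod_le_iff
    intro u hu
    refine AddSubgroup.closure_induction (p := fun u _ => ∀ v ∈ sprod I I, u * v ∈ M)
      ?_ ?_ ?_ ?_ hu
    · rintro x ⟨a, -, m, hm, rfl⟩ v hv
      refine AddSubgroup.closure_induction (p := fun v _ => (a * m) * v ∈ M)
        ?_ ?_ ?_ ?_ hv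
      · rintro y ⟨i, hi, j, hj, rfl⟩
        exact keyAM m hm a i hi j hj
      · simpa using M.zero_mem
      · intro y z _ _ hy hz
        rw [mul_add]; exact M.add_mem hy hz
      · intro y _ hy
        rw [mul_neg]; exact M.neg_mem hy
    · intro v _; simpa using M.zero_mem
    · intro x y _ _ hx hy v hv
      rw [add_mul]; exact M.add_mem (hx v hv) (hy v hv)
    · intro x _ hx v hv
      rw [neg_mul]; exact M.neg_mem (hx v hv)
  refine ⟨part1, part2, fun a => ⟨?_, ?_⟩⟩
  · -- ((Ma)^2)^2 ⊆ M
    set X := M.map (AddMonoidHom.mulRight a) with hX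
    have hXI : X ≤ I := by
      rintro x ⟨m, hm, rfl⟩
      exact (hI m (hMI hm) a).2
    have hXX_MA : sprod X X ≤ sprod M ⊤ := by
      rw [sprod, AddSubgroup.closure_le]
      rintro x ⟨u, ⟨m1, hm1, rfl⟩, v, hv, rfl⟩
      have hvI : v ∈ I := hXI hv
      have : (AddMonoidHom.mulRight a) m1 * v = m1 * v * a := by
        simpa [AddMonoidHom.mulRight] using hrc m1 a v
      rw [this]
      exact mem_sprod_of ((hM m1 hm1 v hvI).2) (AddSubgroup.mem_top a)
    have hXX_II : sprod X X ≤ sprod I I := sprod_mono hXI hXI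
    exact le_trans (sprod_mono hXX_MA hXX_II) part1
  · -- ((aM)^2)^2 ⊆ M
    set X := M.map (AddMonoidHom.mulLeft a) with hX
    have hXI : X ≤ I := by
      rintro x ⟨m, hm, rfl⟩
      exact (hI m (hMI hm) a).1
    have hXX_M : sprod X X ≤ M := by
      apply sprod_le_iff
      rintro u ⟨m1, hm1, rfl⟩ v hv
      have hvI : v ∈ I := hXI hv
      have : (AddMonoidHom.mulLeft a) m1 * v = a * v * m1 := by
        simpa [AddMonoidHom.mulLeft] using hrc a m1 v
      rw [this]
      exact (hM m1 hm1 _ (hI v hvI a).1).1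
    apply sprod_le_iff
    intro u hu v hv
    exact (hM u (hXX_M hu) v ((le_trans hXX_M hMI) hv)).2
end

section
/- Let A be a Novikov algebra, I a two-sided ideal of A, and M an ideal of the algebra I such that the quotient algebra I/M is semiprime. Then M is a two-sided ideal of A. -/
/-! The quotient `I/M` is semiprime, so `M` swallows every ideal `T` of `I` with `M ≤ T` and
`T·I ⊆ M` (then `T² ⊆ M`). Taking `T` generated by `M` and `A·M`, right commutativity
`(bn)i = (bi)n` gives `T·I ⊆ M`, while left symmetry of the associator,
`i(bn) = (ib)n - (bi)n + b(in)`, makes `T` an ideal of `I`; hence `A·M ⊆ M`.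
The same argument then applies to `T` generated by `M` and `M·A`, now with
`(nb)i = n(bi) + (bn)i - b(ni) ∈ M` because `A·M ⊆ M`. -/

section

variable {A : Type*} [NonUnitalNonAssocRing A]

/-- `I/M` is semiprime: ideals of `I/M` are the ideals of `I` containing `M`. -/
def IsSemiprimeQuotient (I M : AddSubgroup A) : Prop :=
  ∀ T : AddSubgroup A, T ≤ I → M ≤ T →
    (∀ t ∈ T, ∀ i ∈ I, i * t ∈ T ∧ t * i ∈ T) →
    (∀ t ∈ T, ∀ s ∈ T, t * s ∈ M) → T ≤ M

theorem mul_mul_eq_of_asc_comm (hsym : ∀ a b c : A, asc a b c = asc b a c) (x y z : A) :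
    x * (y * z) = x * y * z - y * x * z + y * (x * z) := by
  have h := hsym x y z
  unfold asc at h
  rw [sub_eq_sub_iff_sub_eq_sub] at h
  rw [h, sub_add_cancel]

theorem mul_mem_of_mem_closure {S : Set A} {P : AddSubgroup A} {a t : A}
    (hS : ∀ s ∈ S, a * s ∈ P) (ht : t ∈ AddSubgroup.closure S) : a * t ∈ P :=
  (AddSubgroup.closure_le (P.comap (AddMonoidHom.mulLeft a))).2 hS ht

theorem mem_closure_mul_mem {S : Set A} {P : AddSubgroup A} {a t : A}
    (hS : ∀ s ∈ S, s * a ∈ P) (ht : t ∈ AddSubgroup.closure S) : t * a ∈ P :=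
  (AddSubgroup.closure_le (P.comap (AddMonoidHom.mulRight a))).2 hS ht

variable {I M : AddSubgroup A}

theorem subset_of_isSemiprimeQuotient (hquot : IsSemiprimeQuotient I M) (hMI : M ≤ I)
    (hM : ∀ m ∈ M, ∀ i ∈ I, i * m ∈ M ∧ m * i ∈ M) {S : Set A} (hSI : S ⊆ I)
    (hS : ∀ s ∈ S, ∀ i ∈ I, s * i ∈ M ∧ i * s ∈ AddSubgroup.closure (M ∪ S)) :
    S ⊆ M := by
  set T := AddSubgroup.closure ((M : Set A) ∪ S)
  have hMT : M ≤ T := fun x hx => AddSubgroup.subset_closure (Or.inl hx)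
  have hTI : T ≤ I := (AddSubgroup.closure_le I).2 (Set.union_subset hMI hSI)
  have hTmul : ∀ t ∈ T, ∀ i ∈ I, t * i ∈ M := by
    refine fun t ht i hi => mem_closure_mul_mem ?_ ht
    rintro x (hx | hx)
    exacts [(hM x hx i hi).2, (hS x hx i hi).1]
  have hmulT : ∀ t ∈ T, ∀ i ∈ I, i * t ∈ T := by
    refine fun t ht i hi => mul_mem_of_mem_closure ?_ ht
    rintro x (hx | hx)
    exacts [hMT (hM x hx i hi).1, (hS x hx i hi).2]
  have hTM : T ≤ M := hquot T hTI hMT (fun t ht i hi => ⟨hmulT t ht i hi, hMT (hTmul t ht i hi)⟩)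
    (fun t ht s hs => hTmul t ht s (hTI hs))
  exact fun x hx => hTM (AddSubgroup.subset_closure (Or.inr hx))

variable (hI : ∀ i ∈ I, ∀ a : A, a * i ∈ I ∧ i * a ∈ I) (hMI : M ≤ I)
  (hM : ∀ m ∈ M, ∀ i ∈ I, i * m ∈ M ∧ m * i ∈ M) (hquot : IsSemiprimeQuotient I M)
include hI hMI hM hquot

theorem mul_mem_left_of_isSemiprimeQuotient (hsym : ∀ a b c : A, asc a b c = asc b a c)
    (hrc : ∀ a b c : A, a * b * c = a * c * b) {m : A} (hm : m ∈ M) (a : A) : a * m ∈ M := by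
  refine subset_of_isSemiprimeQuotient hquot hMI hM
    (S := {x | ∃ b, ∃ n ∈ M, b * n = x}) ?_ ?_ ⟨a, m, hm, rfl⟩
  · rintro _ ⟨b, n, hn, rfl⟩
    exact (hI n (hMI hn) b).1
  · rintro _ ⟨b, n, hn, rfl⟩ i hi
    refine ⟨?_, ?_⟩
    · rw [hrc]
      exact (hM n hn _ (hI i hi b).1).1
    · rw [mul_mul_eq_of_asc_comm hsym]
      refine add_mem (sub_mem ?_ ?_) ?_
      · exact AddSubgroup.subset_closure (Or.inl (hM n hn _ (hI i hi b).2).1)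
      · exact AddSubgroup.subset_closure (Or.inl (hM n hn _ (hI i hi b).1).1)
      · exact AddSubgroup.subset_closure (Or.inr ⟨b, i * n, (hM n hn i hi).1, rfl⟩)

theorem mul_mem_right_of_isSemiprimeQuotient (hsym : ∀ a b c : A, asc a b c = asc b a c)
    (hAM : ∀ m ∈ M, ∀ a : A, a * m ∈ M) {m : A} (hm : m ∈ M) (a : A) : m * a ∈ M := by
  refine subset_of_isSemiprimeQuotient hquot hMI hM
    (S := {x | ∃ n ∈ M, ∃ b, n * b = x}) ?_ ?_ ⟨m, hm, a, rfl⟩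
  · rintro _ ⟨n, hn, b, rfl⟩
    exact (hI n (hMI hn) b).2
  · rintro _ ⟨n, hn, b, rfl⟩ i hi
    refine ⟨?_, ?_⟩
    · have hsplit : n * b * i = n * (b * i) + b * n * i - b * (n * i) := by
        rw [mul_mul_eq_of_asc_comm hsym n b i]; abel
      rw [hsplit]
      exact sub_mem (add_mem (hM n hn _ (hI i hi b).1).2 (hM _ (hAM n hn b) i hi).2)
        (hAM _ (hM n hn i hi).2 b)
    · rw [mul_mul_eq_of_asc_comm hsym]
      refine add_mem (sub_mem ?_ ?_) ?_
      · exact AddSubgroup.subset_closure (Or.inr ⟨i * n, (hM n hn i hi).1, b, rfl⟩)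
      · exact AddSubgroup.subset_closure (Or.inr ⟨n * i, (hM n hn i hi).2, b, rfl⟩)
      · exact AddSubgroup.subset_closure (Or.inl (hM n hn _ (hI i hi b).2).2)

end

/-- Lemma 6: if `I ⊴ A`, `M ⊴ I` and the quotient algebra `I/M` is semiprime
(i.e. every ideal `T` of `I` containing `M` with `T² ⊆ M` satisfies `T ≤ M`),
then `M` is a two-sided ideal of `A`. -/
theorem novikov_quotient_semiprime_ideal {A : Type*} [NonUnitalNonAssocRing A]
    (hsym : ∀ a b c : A, asc a b c = asc b a c)
    (hrc : ∀ a b c : A, a * b * c = a * c * b)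
    (I : AddSubgroup A) (hI : ∀ i ∈ I, ∀ a : A, a * i ∈ I ∧ i * a ∈ I)
    (M : AddSubgroup A) (hMI : M ≤ I)
    (hM : ∀ m ∈ M, ∀ i ∈ I, i * m ∈ M ∧ m * i ∈ M)
    (hquot : ∀ T : AddSubgroup A, T ≤ I → M ≤ T →
      (∀ t ∈ T, ∀ i ∈ I, i * t ∈ T ∧ t * i ∈ T) →
      (∀ t ∈ T, ∀ s ∈ T, t * s ∈ M) → T ≤ M) :
    ∀ m ∈ M, ∀ a : A, m * a ∈ M ∧ a * m ∈ M := by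
  have hAM : ∀ m ∈ M, ∀ a : A, a * m ∈ M := fun m hm a =>
    mul_mem_left_of_isSemiprimeQuotient hI hMI hM hquot hsym hrc hm a
  exact fun m hm a =>
    ⟨mul_mem_right_of_isSemiprimeQuotient hI hMI hM hquot hsym hAM hm a, hAM m hm a⟩
end

section
/- Let I be a left ideal of a Novikov algebra A. Then M = {x in I : xA ⊆ I} is a two-sided ideal of A. -/
/-- Lemma 7: if `I` is a left ideal of a Novikov algebra `A`, then
`M = {x ∈ I : xA ⊆ I}` is a two-sided ideal of `A`. -/
theorem novikov_lemma7 {A : Type*} [NonUnitalNonAssocRing A]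
    (hsym : ∀ a b c : A, asc a b c = asc b a c)
    (hrc : ∀ a b c : A, a * b * c = a * c * b)
    (I : AddSubgroup A) (hI : ∀ i ∈ I, ∀ a : A, a * i ∈ I) :
    (0 : A) ∈ {x : A | x ∈ I ∧ ∀ a : A, x * a ∈ I} ∧
    (∀ x ∈ {x : A | x ∈ I ∧ ∀ a : A, x * a ∈ I}, ∀ y ∈ {x : A | x ∈ I ∧ ∀ a : A, x * a ∈ I},
      x + y ∈ {x : A | x ∈ I ∧ ∀ a : A, x * a ∈ I}) ∧
    (∀ x ∈ {x : A | x ∈ I ∧ ∀ a : A, x * a ∈ I}, -x ∈ {x : A | x ∈ I ∧ ∀ a : A, x * a ∈ I}) ∧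
    (∀ x ∈ {x : A | x ∈ I ∧ ∀ a : A, x * a ∈ I}, ∀ b : A,
      b * x ∈ {x : A | x ∈ I ∧ ∀ a : A, x * a ∈ I} ∧
      x * b ∈ {x : A | x ∈ I ∧ ∀ a : A, x * a ∈ I}) := by
  refine ⟨⟨I.zero_mem, fun a => by simpa using I.zero_mem⟩, ?_, ?_, ?_⟩
  · rintro x ⟨hxI, hxM⟩ y ⟨hyI, hyM⟩
    exact ⟨I.add_mem hxI hyI, fun a => by rw [add_mul]; exact I.add_mem (hxM a) (hyM a)⟩
  · rintro x ⟨hxI, hxM⟩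
    exact ⟨I.neg_mem hxI, fun a => by rw [neg_mul]; exact I.neg_mem (hxM a)⟩
  · rintro x ⟨hxI, hxM⟩ b
    constructor
    · refine ⟨hI x hxI b, fun a => ?_⟩
      rw [hrc b x a]
      exact hI x hxI (b * a)
    · refine ⟨hxM b, fun a => ?_⟩
      have h1 := hsym x b a
      simp only [asc] at h1
      rw [hrc b x a] at h1
      have key : x * b * a = x * (b * a) + (b * a * x - b * (x * a)) := by
        rw [← h1]; abel
      rw [key]
      exact I.add_mem (hxM (b * a)) (I.sub_mem (hI x hxI (b * a)) (hI (x * a) (hxM a) b))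
end

section
/- Let A be a Novikov algebra and H a nonzero commutative two-sided ideal of A with H² = H. Then H is contained in the nucleus N(A) of A. -/
/-!
By left-symmetry the left and middle nuclei of a Novikov algebra coincide, and the middle and
right nuclei are additive subgroups; since `H = H²` is additively generated by the products `uv`
with `u, v ∈ H`, it suffices to show that these products are middle- and right-nuclear.
Commutativity of `H`, left-symmetry and right-commutativity rewrite both `(a(uv))b` and
`a((uv)b)` to `2(au)(vb) - ((uv)a)b`. Once `H` is middle-nuclear (hence left-nuclear), a chain of
right-commutations moves `a(b(uv))` to `(ab)(uv)`.
-/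

def IsLeftSymmetric (A : Type*) [NonUnitalNonAssocRing A] : Prop :=
  ∀ a b c : A, asc a b c = asc b a c

structure IsNovikov (A : Type*) [NonUnitalNonAssocRing A] : Prop where
  isLeftSymmetric : IsLeftSymmetric A
  mul_right_comm : ∀ a b c : A, a * b * c = a * c * b

structure IsCommIdeal {A : Type*} [NonUnitalNonAssocRing A] (H : AddSubgroup A) : Prop where
  mul_mem_left : ∀ h ∈ H, ∀ a : A, a * h ∈ H
  mul_mem_right : ∀ h ∈ H, ∀ a : A, h * a ∈ H
  mul_comm : ∀ x ∈ H, ∀ y ∈ H, x * y = y * x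

section Nucleus

variable {A : Type*} [NonUnitalNonAssocRing A]

lemma asc_add_middle (a x y b : A) : asc a (x + y) b = asc a x b + asc a y b := by
  simp only [asc, mul_add, add_mul]; abel

lemma asc_neg_middle (a x b : A) : asc a (-x) b = -asc a x b := by
  simp only [asc, mul_neg, neg_mul]; abel

lemma asc_add_right (a b x y : A) : asc a b (x + y) = asc a b x + asc a b y := by
  simp only [asc, mul_add]; abel

lemma asc_neg_right (a b x : A) : asc a b (-x) = -asc a b x := by
  simp only [asc, mul_neg]; abel

variable (A) in
def middleNucleus : AddSubgroup A where
  carrier := {n | ∀ a b : A, asc a n b = 0}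
  zero_mem' a b := by simp [asc]
  add_mem' hx hy a b := by rw [asc_add_middle, hx a b, hy a b, add_zero]
  neg_mem' hx a b := by rw [asc_neg_middle, hx a b, neg_zero]

variable (A) in
def rightNucleus : AddSubgroup A where
  carrier := {n | ∀ a b : A, asc a b n = 0}
  zero_mem' a b := by simp [asc]
  add_mem' hx hy a b := by rw [asc_add_right, hx a b, hy a b, add_zero]
  neg_mem' hx a b := by rw [asc_neg_right, hx a b, neg_zero]

lemma mul_assoc_of_mem_middleNucleus {n : A} (hn : n ∈ middleNucleus A) (a b : A) :
    a * n * b = a * (n * b) :=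
  sub_eq_zero.mp (hn a b)

lemma AddSubgroup.le_of_mul_mem {H K : AddSubgroup A}
    (hsq : AddSubgroup.closure {x : A | ∃ u ∈ H, ∃ v ∈ H, x = u * v} = H)
    (hK : ∀ u ∈ H, ∀ v ∈ H, u * v ∈ K) : H ≤ K := by
  rw [← hsq, AddSubgroup.closure_le]
  rintro _ ⟨u, hu, v, hv, rfl⟩
  exact hK u hu v hv

end Nucleus

namespace IsLeftSymmetric

variable {A : Type*} [NonUnitalNonAssocRing A]

lemma mul_left_comm (hsym : IsLeftSymmetric A) {u v : A} (huv : u * v = v * u) (c : A) :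
    u * (v * c) = v * (u * c) := by
  have h := hsym u v c
  rw [asc, asc, huv] at h
  exact sub_right_inj.mp h

lemma asc_eq_zero_of_mem_middleNucleus (hsym : IsLeftSymmetric A) {n : A}
    (hn : n ∈ middleNucleus A) (a b : A) : asc n a b = 0 :=
  (hsym n a b).trans (hn a b)

lemma mul_assoc_of_mem_middleNucleus (hsym : IsLeftSymmetric A) {n : A}
    (hn : n ∈ middleNucleus A) (a b : A) : n * a * b = n * (a * b) :=
  sub_eq_zero.mp (hsym.asc_eq_zero_of_mem_middleNucleus hn a b)

end IsLeftSymmetric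

namespace IsNovikov

variable {A : Type*} [NonUnitalNonAssocRing A] {H : AddSubgroup A}

lemma mul_assoc_of_mem (hA : IsNovikov A) (hH : IsCommIdeal H) {u v : A} (hu : u ∈ H)
    (hv : v ∈ H) (c : A) : u * v * c = u * (v * c) := by
  rw [hA.mul_right_comm, hH.mul_comm _ (hH.mul_mem_right u hu c) v hv,
    hA.isLeftSymmetric.mul_left_comm (hH.mul_comm v hv u hu)]

lemma mul_mul_eq_two_nsmul_sub (hA : IsNovikov A) (hH : IsCommIdeal H) {u w : A} (hu : u ∈ H)
    (hw : w ∈ H) (a : A) : a * (u * w) = 2 • (a * u * w) - u * w * a := by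
  have h := hA.isLeftSymmetric u a w
  rw [asc, asc, hA.mul_right_comm u a w, hH.mul_comm u hu _ (hH.mul_mem_left w hw a),
    hA.mul_right_comm a w u, sub_eq_sub_iff_add_eq_add] at h
  rw [two_nsmul]
  exact eq_sub_of_add_eq' h

lemma mul_mem_middleNucleus (hA : IsNovikov A) (hH : IsCommIdeal H) {u v : A} (hu : u ∈ H)
    (hv : v ∈ H) : u * v ∈ middleNucleus A := by
  intro a b
  have hau := hH.mul_mem_left u hu a
  have hvb := hH.mul_mem_right v hv b
  have hleft : a * (u * v) * b = 2 • (a * u * (v * b)) - u * v * a * b := by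
    rw [hA.mul_mul_eq_two_nsmul_sub hH hu hv, sub_mul, smul_mul_assoc,
      hA.mul_assoc_of_mem hH hau hv]
  have hright : a * (u * v * b) = 2 • (a * u * (v * b)) - u * v * a * b := by
    rw [hA.mul_assoc_of_mem hH hu hv, hA.mul_mul_eq_two_nsmul_sub hH hu hvb,
      ← hA.mul_assoc_of_mem hH hu hv b, hA.mul_right_comm (u * v) b a]
  rw [asc, hleft, hright, sub_self]

lemma le_middleNucleus (hA : IsNovikov A) (hH : IsCommIdeal H)
    (hsq : AddSubgroup.closure {x : A | ∃ u ∈ H, ∃ v ∈ H, x = u * v} = H) :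
    H ≤ middleNucleus A :=
  AddSubgroup.le_of_mul_mem hsq fun _ hu _ hv => hA.mul_mem_middleNucleus hH hu hv

lemma mul_mem_rightNucleus (hA : IsNovikov A) (hleft : ∀ h ∈ H, ∀ a : A, a * h ∈ H)
    (hmid : H ≤ middleNucleus A) {u v : A} (hu : u ∈ H) (hv : v ∈ H) :
    u * v ∈ rightNucleus A := by
  intro a b
  have hassoc {n : A} (hn : n ∈ H) := mul_assoc_of_mem_middleNucleus (hmid hn)
  rw [asc, sub_eq_zero]
  symm
  calc a * (b * (u * v))
      = a * (b * u) * v := by rw [← hassoc hu, ← hassoc (hleft u hu b)]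
    _ = a * v * b * u := by
      rw [hA.mul_right_comm, hA.isLeftSymmetric.mul_assoc_of_mem_middleNucleus
        (hmid (hleft v hv a))]
    _ = a * b * (u * v) := by
      rw [hA.mul_right_comm a v b, hA.mul_right_comm _ v u, hassoc hu]

lemma le_rightNucleus (hA : IsNovikov A) (hH : IsCommIdeal H)
    (hsq : AddSubgroup.closure {x : A | ∃ u ∈ H, ∃ v ∈ H, x = u * v} = H) :
    H ≤ rightNucleus A :=
  AddSubgroup.le_of_mul_mem hsq fun _ hu _ hv =>
    hA.mul_mem_rightNucleus hH.mul_mem_left (hA.le_middleNucleus hH hsq) hu hv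

end IsNovikov

theorem novikov_comm_ideal_subset_nucleus_general {A : Type*} [NonUnitalNonAssocRing A]
    (hsym : ∀ a b c : A, asc a b c = asc b a c)
    (hrc : ∀ a b c : A, a * b * c = a * c * b)
    (H : AddSubgroup A)
    (hH : ∀ h ∈ H, ∀ a : A, a * h ∈ H ∧ h * a ∈ H)
    (hcomm : ∀ x ∈ H, ∀ y ∈ H, x * y = y * x)
    (hsq : AddSubgroup.closure {x : A | ∃ u ∈ H, ∃ v ∈ H, x = u * v} = H) :
    ∀ h ∈ H, inNuc h := by
  have hA : IsNovikov A := ⟨hsym, hrc⟩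
  have hH' : IsCommIdeal H := ⟨fun h hh a => (hH h hh a).1, fun h hh a => (hH h hh a).2, hcomm⟩
  have hmid := hA.le_middleNucleus hH' hsq
  have hright := hA.le_rightNucleus hH' hsq
  intro h hh a b
  exact ⟨hA.isLeftSymmetric.asc_eq_zero_of_mem_middleNucleus (hmid hh) a b, hmid hh a b,
    hright hh a b⟩

/-- Lemma 8: if `H` is a nonzero commutative two-sided ideal of a Novikov algebra `A`
with `H² = H`, then `H ⊆ N(A)`. -/
theorem novikov_comm_ideal_subset_nucleus {A : Type*} [NonUnitalNonAssocRing A]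
    (hsym : ∀ a b c : A, asc a b c = asc b a c)
    (hrc : ∀ a b c : A, a * b * c = a * c * b)
    (H : AddSubgroup A) (hne : H ≠ ⊥)
    (hH : ∀ h ∈ H, ∀ a : A, a * h ∈ H ∧ h * a ∈ H)
    (hcomm : ∀ x ∈ H, ∀ y ∈ H, x * y = y * x)
    (hsq : AddSubgroup.closure {x : A | ∃ u ∈ H, ∃ v ∈ H, x = u * v} = H) :
    ∀ h ∈ H, inNuc h :=
  novikov_comm_ideal_subset_nucleus_general hsym hrc H hH hcomm hsq
end
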